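/- arXiv:1101.4292 — 6 statements merged into one kernel-verified Lean document; each statement's English description precedes it below -/
import Mathlib

section
/- For every d ≥ 4 there exists a lattice d-polytope P ⊂ ℝ^d such that P is hollow, P is not properly contained in any hollow lattice d-polytope, but P is properly contained in some hollow compact convex set K ⊂ ℝ^d (so P is maximal as a hollow lattice polytope but not maximal as a hollow convex body). -/
open MeasureTheory
open scoped ENNReal

/-- The set of integer lattice points of `ℝ^d`. -/
def intPts (d : ℕ) : Set (Fin d → ℝ) := {x | ∀ i, ∃ a : ℤ, x i = a}

/-- The set of points of `s·ℤ^d` inside `ℝ^d`. -/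
def sPts (s d : ℕ) : Set (Fin d → ℝ) := {x | ∀ i, ∃ a : ℤ, x i = (s : ℝ) * a}

/-- A lattice polytope: the convex hull of a nonempty finite set of lattice points. -/
def IsLatticePolytope {d : ℕ} (P : Set (Fin d → ℝ)) : Prop :=
  ∃ V : Set (Fin d → ℝ), V.Finite ∧ V.Nonempty ∧ V ⊆ intPts d ∧ P = convexHull ℝ V

/-- Full-dimensionality: the affine span is everything. -/
def IsFullDim {d : ℕ} (P : Set (Fin d → ℝ)) : Prop :=
  affineSpan ℝ P = ⊤

/-- A set is hollow if its interior contains no lattice point. -/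
def Hollow {d : ℕ} (P : Set (Fin d → ℝ)) : Prop :=
  interior P ∩ intPts d = ∅

/-- A set is `s`-hollow if its interior contains no point of `s·ℤ^d`. -/
def SHollow (s : ℕ) {d : ℕ} (P : Set (Fin d → ℝ)) : Prop :=
  interior P ∩ sPts s d = ∅

/-- Unimodular equivalence: an affine bijection of `ℝ^d` preserving `ℤ^d` maps `P` onto `Q`. -/
def UnimodEquiv {d : ℕ} (P Q : Set (Fin d → ℝ)) : Prop :=
  ∃ T : (Fin d → ℝ) ≃ᵃ[ℝ] (Fin d → ℝ), T '' intPts d = intPts d ∧ T '' P = Q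

/-- Lattice width: infimum over nonzero integer directions `u` of `max ⟨u,·⟩ - min ⟨u,·⟩`
(with value `∞` if there is no direction). -/
noncomputable def latticeWidth {n : ℕ} (K : Set (Fin n → ℝ)) : ℝ≥0∞ :=
  ⨅ u : {u : Fin n → ℤ // u ≠ 0},
    ENNReal.ofReal
      (sSup ((fun x => ∑ i, (u.1 i : ℝ) * x i) '' K) -
       sInf ((fun x => ∑ i, (u.1 i : ℝ) * x i) '' K))

/-- `α = 1/(2^(d-2) - 1)`. -/
noncomputable def alphaConst (d : ℕ) : ℝ := 1 / (2 ^ (d - 2) - 1)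

/-- The coefficient of `x_{i+1}` in the defining inequality of the simplex `Δ(d)`:
`x_1/2 + x_2/4 + ⋯ + x_{d-2}/2^{d-2} + x_{d-1}/(2^{d-1}-1) + x_d/(2^{d-1}+1+α) ≤ 1`. -/
noncomputable def coef (d : ℕ) (i : Fin d) : ℝ :=
  if (i : ℕ) < d - 2 then 1 / 2 ^ ((i : ℕ) + 1)
  else if (i : ℕ) = d - 2 then 1 / (2 ^ (d - 1) - 1)
  else 1 / (2 ^ (d - 1) + 1 + alphaConst d)

/-- The simplex `Δ(d)` of Definition 3.1. -/
noncomputable def DeltaPoly (d : ℕ) : Set (Fin d → ℝ) :=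
  {x | (∀ i, 0 ≤ x i) ∧ ∑ i, coef d i * x i ≤ 1}

/-- The coefficient of `x_{i+1}` in the extra inequality
`x_1/2 + ⋯ + x_{d-3}/2^{d-3} + (2x_{d-2} + x_{d-1} + x_d)/(2^{d-1}+1) ≤ 1`. -/
noncomputable def coef2 (d : ℕ) (i : Fin d) : ℝ :=
  if (i : ℕ) < d - 3 then 1 / 2 ^ ((i : ℕ) + 1)
  else if (i : ℕ) = d - 3 then 2 / (2 ^ (d - 1) + 1)
  else 1 / (2 ^ (d - 1) + 1)

/-!
Write `d = k + 3` and `c = coef d`, so that `Δ := DeltaPoly d = {x ≥ 0, c ⬝ᵥ x ≤ 1}`. The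
coefficients sum to `1`, so `Δ` is hollow: a lattice point in its interior has all coordinates
`≥ 1`, hence `c ⬝ᵥ x ≥ 1`, whereas `c ⬝ᵥ x < 1` in the interior. Every vertex `(c j)⁻¹ • e j` of `Δ` is a lattice point except the
last one, and `2^(d-1) + 1 < (c last)⁻¹ < 2^(d-1) + 2` once `d ≥ 4`. So the integer hull `P` of
`Δ` is a hollow lattice polytope strictly inside `Δ`, full-dimensional since it contains `0` and
a lattice point on each axis.

If `Q ⊋ P` is a lattice polytope, some vertex `v` of `Q` is a lattice point outside `Δ`. If
`v i < 0`, then `1 - e i` lies in the relative interior of the facet `x i = 0` of the simplex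
spanned by `0` and the farthest lattice point of `Δ` on each axis. If `c ⬝ᵥ v > 1`, then `1` lies
in the relative interior of the facet on `c ⬝ᵥ x = 1` of the simplex spanned by `0`, the lattice
point `e (d-3) + (2^(d-1) - 1) • e (d-1)` and the vertices of `Δ` other than the last. In both
cases `v` lies strictly beyond that facet, so the lattice point is interior to
`conv (P ∪ {v}) ⊆ Q`, and `Q` is not hollow.
-/

open Set Filter Topology

section ConvexCombination

variable {E : Type*} [AddCommGroup E] [Module ℝ E]

theorem Convex.sum_smul_mem_of_zero_mem {ι : Type*} [Fintype ι] {s : Set E}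
    (hs : Convex ℝ s) (h0 : (0 : E) ∈ s) {μ : ι → ℝ} {p : ι → E} (hμ : ∀ i, 0 ≤ μ i)
    (hμ1 : ∑ i, μ i ≤ 1) (hp : ∀ i, p i ∈ s) : ∑ i, μ i • p i ∈ s := by
  classical
  have hsum : ∑ o : Option ι, (o.elim (1 - ∑ i, μ i) μ : ℝ) = 1 := by
    simp [Fintype.sum_option]
  simpa [Fintype.sum_option] using hs.sum_mem (t := Finset.univ)
    (w := fun o : Option ι => o.elim (1 - ∑ i, μ i) μ) (z := fun o : Option ι => o.elim 0 p)
    (by rintro (_ | i) - <;> simp [hμ1, hμ]) hsum (by rintro (_ | i) - <;> simp [h0, hp])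

end ConvexCombination

section ConvexInterior

variable {E : Type*} [AddCommGroup E] [Module ℝ E] [TopologicalSpace E]
  [IsTopologicalAddGroup E] [ContinuousSMul ℝ E]

theorem exists_pos_add_smul_mem_of_mem_nhds {s : Set E} {x : E} (hs : s ∈ 𝓝 x) (v : E) :
    ∃ t : ℝ, 0 < t ∧ x + t • v ∈ s := by
  have hlim : Tendsto (fun t : ℝ => x + t • v) (𝓝[>] 0) (𝓝 x) := by
    refine tendsto_nhdsWithin_of_tendsto_nhds ?_
    exact (by fun_prop : Continuous fun t : ℝ => x + t • v).tendsto' 0 x (by simp)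
  obtain ⟨t, hts, ht⟩ := ((hlim.eventually hs).and self_mem_nhdsWithin).exists
  exact ⟨t, ht, hts⟩

theorem Convex.mem_interior_of_open_inter_halfSpace_subset {Q U : Set E} (hQ : Convex ℝ Q)
    (hU : IsOpen U) (φ : E →L[ℝ] ℝ) {c : ℝ} (hUQ : U ∩ {x | φ x < c} ⊆ Q) {v w : E}
    (hv : v ∈ Q) (hw : w ∈ U) (hwc : φ w ≤ c) (hwv : φ w < φ v) : w ∈ interior Q := by
  -- `w` lies on the open segment from `v` to a point `w + t • (w - v)` of `U ∩ {φ < c}`.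
  obtain ⟨t, ht, hyU⟩ := exists_pos_add_smul_mem_of_mem_nhds (hU.mem_nhds hw) (w - v)
  have hyc : φ (w + t • (w - v)) < c := by
    simp only [map_add, map_smul, map_sub, smul_eq_mul]
    nlinarith
  have hy : w + t • (w - v) ∈ interior Q :=
    interior_maximal hUQ (hU.inter (isOpen_lt φ.continuous continuous_const)) ⟨hyU, hyc⟩
  have hcomb : (1 + t)⁻¹ • (w + t • (w - v)) + (t / (1 + t)) • v = w := by
    match_scalars
    field_simp
    ring
  rw [← hcomb]
  exact hQ.combo_interior_self_mem_interior hy hv (by positivity) (by positivity)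
    (by field_simp)

end ConvexInterior

theorem intPts_apply_le_of_lt_add_one {n : ℕ} {x : Fin n → ℝ} (hx : x ∈ intPts n) (i : Fin n)
    {b : ℤ} (h : x i < b + 1) : x i ≤ b := by
  obtain ⟨c, hc⟩ := hx i
  rw [hc] at h ⊢
  exact_mod_cast Int.lt_add_one_iff.mp (by exact_mod_cast h)

theorem intPts_subset_span (n : ℕ) :
    intPts n ⊆ Submodule.span ℤ (Set.range (Pi.basisFun ℝ (Fin n))) := by
  intro x hx
  rw [SetLike.mem_coe, Module.Basis.mem_span_iff_repr_mem]
  intro i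
  obtain ⟨c, hc⟩ := hx i
  exact ⟨c, by simp [hc]⟩

theorem Bornology.IsBounded.finite_inter_intPts {n : ℕ} {K : Set (Fin n → ℝ)}
    (hK : Bornology.IsBounded K) : (K ∩ intPts n).Finite :=
  (ZSpan.setFinite_inter (Pi.basisFun ℝ (Fin n)) hK).subset
    (inter_subset_inter_right K (intPts_subset_span n))

theorem single_mem_intPts {n : ℕ} (i : Fin n) (c : ℤ) : Pi.single i (c : ℝ) ∈ intPts n := by
  intro j
  by_cases h : j = i
  · exact ⟨c, by simp [h]⟩
  · exact ⟨0, by simp [h]⟩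

theorem affineSpan_eq_top_of_single_mem {ι : Type*} [Fintype ι] [DecidableEq ι]
    {s : Set (ι → ℝ)} (h0 : 0 ∈ s) {M : ι → ℝ} (hM : ∀ i, M i ≠ 0)
    (hs : ∀ i, Pi.single i (M i) ∈ s) : affineSpan ℝ s = ⊤ := by
  rw [AffineSubspace.affineSpan_eq_top_iff_vectorSpan_eq_top_of_nonempty ℝ _ _ ⟨0, h0⟩,
    eq_top_iff, ← (Pi.basisFun ℝ ι).span_eq, Submodule.span_le]
  rintro _ ⟨i, rfl⟩
  have hmem : Pi.single i (M i) -ᵥ (0 : ι → ℝ) ∈ vectorSpan ℝ s :=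
    vsub_mem_vectorSpan ℝ (hs i) h0
  have : Pi.basisFun ℝ ι i = (M i)⁻¹ • (Pi.single i (M i) -ᵥ (0 : ι → ℝ)) := by
    ext j
    by_cases h : j = i <;> simp [h, hM i]
  rw [this]
  exact Submodule.smul_mem _ _ hmem

theorem Hollow.mono {n : ℕ} {K L : Set (Fin n → ℝ)} (hK : Hollow K) (hLK : L ⊆ K) : Hollow L :=
  subset_eq_empty (inter_subset_inter_left _ (interior_mono hLK)) hK

noncomputable def integerHull {n : ℕ} (K : Set (Fin n → ℝ)) : Set (Fin n → ℝ) :=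
  convexHull ℝ (K ∩ intPts n)

section integerHull

variable {n : ℕ} {K : Set (Fin n → ℝ)}

theorem integerHull_subset (hK : Convex ℝ K) : integerHull K ⊆ K :=
  convexHull_min inter_subset_left hK

theorem convex_integerHull : Convex ℝ (integerHull K) := convex_convexHull ℝ _

theorem subset_integerHull : K ∩ intPts n ⊆ integerHull K := subset_convexHull ℝ _

theorem isLatticePolytope_integerHull (hK : Bornology.IsBounded K)
    (hne : (K ∩ intPts n).Nonempty) : IsLatticePolytope (integerHull K) :=
  ⟨_, hK.finite_inter_intPts, hne, inter_subset_right, rfl⟩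

end integerHull

/-- The simplex with vertices `0` and `(a i)⁻¹ • e i`, when all `a i > 0`. -/
def cornerSimplex {ι : Type*} [Fintype ι] (a : ι → ℝ) : Set (ι → ℝ) :=
  {x | (∀ i, 0 ≤ x i) ∧ a ⬝ᵥ x ≤ 1}

section cornerSimplex

variable {ι : Type*} [Fintype ι] {a : ι → ℝ}

theorem convex_cornerSimplex : Convex ℝ (cornerSimplex a) :=
  (convex_Ici 0).inter ((convex_Iic 1).linear_preimage (dotProductBilin ℝ ℝ a))

theorem isClosed_cornerSimplex : IsClosed (cornerSimplex a) :=
  isClosed_Ici.inter (isClosed_le (continuous_const.dotProduct continuous_id) continuous_const)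

theorem mul_le_one_of_mem_cornerSimplex (ha : ∀ i, 0 ≤ a i) {x : ι → ℝ}
    (hx : x ∈ cornerSimplex a) (i : ι) : a i * x i ≤ 1 :=
  (Finset.single_le_sum (fun j _ => mul_nonneg (ha j) (hx.1 j)) (Finset.mem_univ i)).trans hx.2

theorem isCompact_cornerSimplex (ha : ∀ i, 0 < a i) : IsCompact (cornerSimplex a) := by
  refine (isCompact_Icc (a := 0) (b := fun i => (a i)⁻¹)).of_isClosed_subset
    isClosed_cornerSimplex fun x hx => ⟨hx.1, fun i => ?_⟩
  rw [show (fun i => (a i)⁻¹) i = 1 / a i from (one_div _).symm, le_div_iff₀' (ha i)]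
  exact mul_le_one_of_mem_cornerSimplex (fun i => (ha i).le) hx i

theorem cornerSimplex_subset [DecidableEq ι] {P : Set (ι → ℝ)} (hP : Convex ℝ P) (h0 : 0 ∈ P)
    (ha : ∀ i, 0 < a i) (hv : ∀ i, Pi.single i (a i)⁻¹ ∈ P) : cornerSimplex a ⊆ P := by
  rintro x ⟨hx0, hx1⟩
  have hx : x = ∑ i, (a i * x i) • Pi.single i (a i)⁻¹ := by
    ext j
    simp only [Finset.sum_apply, Pi.smul_apply, Pi.single_apply, smul_eq_mul, mul_ite, mul_zero,
      Finset.sum_ite_eq, Finset.mem_univ, if_true]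
    field_simp [(ha j).ne']
  rw [hx]
  exact hP.sum_smul_mem_of_zero_mem h0 (fun i => mul_nonneg (ha i).le (hx0 i)) hx1 hv

end cornerSimplex

theorem hollow_cornerSimplex {n : ℕ} {a : Fin n → ℝ} (ha : ∀ i, 0 ≤ a i)
    (h1 : 1 ≤ ∑ i, a i) : Hollow (cornerSimplex a) := by
  refine eq_empty_iff_forall_notMem.2 fun z ⟨hz, hzℤ⟩ => ?_
  have hnhds := mem_interior_iff_mem_nhds.1 hz
  have hz1 : ∀ i, 1 ≤ z i := by
    intro i
    obtain ⟨t, ht, hmem⟩ := exists_pos_add_smul_mem_of_mem_nhds hnhds (-Pi.single i 1)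
    have hzi := hmem.1 i
    simp only [Pi.add_apply, Pi.smul_apply, Pi.neg_apply, Pi.single_eq_same, smul_eq_mul] at hzi
    by_contra! h
    have := intPts_apply_le_of_lt_add_one hzℤ i (b := 0) (by simpa using h)
    push_cast at this
    linarith
  have hz : 1 ≤ a ⬝ᵥ z :=
    h1.trans (Finset.sum_le_sum fun i _ => le_mul_of_one_le_right (ha i) (hz1 i))
  obtain ⟨t, ht, hmem⟩ := exists_pos_add_smul_mem_of_mem_nhds hnhds z
  have := hmem.2
  rw [dotProduct_add, dotProduct_smul, smul_eq_mul] at this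
  nlinarith

section Delta

variable (k : ℕ)

theorem coef_castSucc_castSucc (j : Fin (k + 1)) :
    coef (k + 3) j.castSucc.castSucc = 1 / 2 ^ ((j : ℕ) + 1) := by
  simp [coef, j.isLt]

theorem coef_castSucc_last :
    coef (k + 3) (Fin.last (k + 1)).castSucc = 1 / (2 * 2 ^ (k + 1) - 1) := by
  rw [coef, if_neg (by simp), if_pos (by simp), show k + 3 - 1 = (k + 1) + 1 by omega,
    pow_succ']

theorem two_le_two_pow_succ : (2 : ℝ) ≤ 2 ^ (k + 1) := le_self_pow₀ (by norm_num) (by omega)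

theorem coef_last :
    coef (k + 3) (Fin.last (k + 2)) =
      (2 ^ (k + 1) - 1) / (2 ^ (k + 1) * (2 * 2 ^ (k + 1) - 1)) := by
  have hx := two_le_two_pow_succ k
  rw [coef, if_neg (by simp), if_neg (by simp), alphaConst, show k + 3 - 2 = k + 1 by omega,
    show k + 3 - 1 = (k + 1) + 1 by omega, pow_succ 2 (k + 1)]
  generalize (2 : ℝ) ^ (k + 1) = x at *
  have h1 : x - 1 ≠ 0 := by linarith
  have hden : x * 2 + 1 + 1 / (x - 1) = x * (2 * x - 1) / (x - 1) := by field_simp; ring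
  rw [hden, one_div_div]

theorem sum_coef : ∑ i, coef (k + 3) i = 1 := by
  have hgeom : ∑ j : Fin (k + 1), (1 : ℝ) / 2 ^ ((j : ℕ) + 1) = 1 - 1 / 2 ^ (k + 1) := by
    rw [Fin.sum_univ_eq_sum_range (fun j => (1 : ℝ) / 2 ^ (j + 1))]
    induction k with
    | zero => norm_num
    | succ n ih => rw [Finset.sum_range_succ, ih]; field_simp; ring
  have hx := two_le_two_pow_succ k
  rw [Fin.sum_univ_castSucc, Fin.sum_univ_castSucc]
  simp only [coef_castSucc_castSucc, coef_castSucc_last, coef_last, hgeom]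
  generalize (2 : ℝ) ^ (k + 1) = x at *
  have h0 : x ≠ 0 := by positivity
  have h2 : 2 * x - 1 ≠ 0 := by linarith
  have : 1 / (2 * x - 1) + (x - 1) / (x * (2 * x - 1)) = 1 / x := by field_simp; ring
  linarith

theorem coef_pos (i : Fin (k + 3)) : 0 < coef (k + 3) i := by
  have hx := two_le_two_pow_succ k
  induction i using Fin.lastCases with
  | last => rw [coef_last]; apply div_pos <;> nlinarith
  | cast i =>
    induction i using Fin.lastCases with
    | last => rw [coef_castSucc_last]; apply div_pos <;> linarith
    | cast j => rw [coef_castSucc_castSucc]; positivity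

theorem isCompact_deltaPoly : IsCompact (DeltaPoly (k + 3)) :=
  isCompact_cornerSimplex (coef_pos k)

theorem convex_deltaPoly : Convex ℝ (DeltaPoly (k + 3)) := convex_cornerSimplex

theorem hollow_deltaPoly : Hollow (DeltaPoly (k + 3)) :=
  hollow_cornerSimplex (fun i => (coef_pos k i).le) (sum_coef k).ge

theorem inv_coef_last :
    (coef (k + 3) (Fin.last (k + 2)))⁻¹ =
      2 ^ (k + 1) * (2 * 2 ^ (k + 1) - 1) / (2 ^ (k + 1) - 1) := by
  rw [coef_last, inv_div]

theorem two_mul_two_pow_add_one_lt_inv_coef_last :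
    2 * 2 ^ (k + 1) + 1 < (coef (k + 3) (Fin.last (k + 2)))⁻¹ := by
  have hx := two_le_two_pow_succ k
  rw [inv_coef_last, lt_div_iff₀ (by linarith)]
  nlinarith

theorem inv_coef_last_lt (hk : 1 ≤ k) :
    (coef (k + 3) (Fin.last (k + 2)))⁻¹ < 2 * 2 ^ (k + 1) + 2 := by
  have hx : (4 : ℝ) ≤ 2 ^ (k + 1) := by
    calc (4 : ℝ) = 2 ^ 2 := by norm_num
      _ ≤ 2 ^ (k + 1) := pow_le_pow_right₀ (by norm_num) (by omega)
  rw [inv_coef_last, div_lt_iff₀ (by linarith)]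
  nlinarith

/-- Coefficients of the simplex spanned by `0` and the farthest lattice point of `Δ(k+3)` on each
axis. -/
noncomputable def coefAxis : Fin (k + 3) → ℝ :=
  Function.update (coef (k + 3)) (Fin.last (k + 2)) (1 / (2 * 2 ^ (k + 1) + 1))

theorem coefAxis_castSucc (j : Fin (k + 2)) : coefAxis k j.castSucc = coef (k + 3) j.castSucc :=
  Function.update_of_ne (Fin.castSucc_lt_last j).ne _ _

theorem coefAxis_last : coefAxis k (Fin.last (k + 2)) = 1 / (2 * 2 ^ (k + 1) + 1) :=
  Function.update_self _ _ _

theorem coef_le_coefAxis (i : Fin (k + 3)) : coef (k + 3) i ≤ coefAxis k i := by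
  induction i using Fin.lastCases with
  | last =>
    rw [coefAxis_last, ← inv_inv (coef _ _), one_div]
    exact inv_anti₀ (by positivity) (two_mul_two_pow_add_one_lt_inv_coef_last k).le
  | cast j => rw [coefAxis_castSucc]

theorem coefAxis_last_le (i : Fin (k + 3)) : coefAxis k (Fin.last (k + 2)) ≤ coefAxis k i := by
  have hx := two_le_two_pow_succ k
  rw [coefAxis_last]
  induction i using Fin.lastCases with
  | last => rw [coefAxis_last]
  | cast i =>
    rw [coefAxis_castSucc]
    induction i using Fin.lastCases with
    | last => rw [coef_castSucc_last]; gcongr <;> linarith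
    | cast j =>
      rw [coef_castSucc_castSucc]
      have : (2 : ℝ) ^ ((j : ℕ) + 1) ≤ 2 ^ (k + 1) :=
        pow_le_pow_right₀ (by norm_num) (by have := j.isLt; omega)
      gcongr
      linarith

theorem coefAxis_pos (i : Fin (k + 3)) : 0 < coefAxis k i :=
  (coef_pos k i).trans_le (coef_le_coefAxis k i)

theorem sum_coefAxis_sub_lt (i : Fin (k + 3)) : ∑ j, coefAxis k j - coefAxis k i < 1 := by
  have hsum := sum_coef k
  rw [Fin.sum_univ_castSucc] at hsum ⊢
  simp only [coefAxis_castSucc]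
  linarith [coefAxis_last_le k i, coef_pos k (Fin.last _)]

theorem exists_intCast_eq_inv_coefAxis (i : Fin (k + 3)) :
    ∃ c : ℤ, (coefAxis k i)⁻¹ = c := by
  induction i using Fin.lastCases with
  | last => exact ⟨2 * 2 ^ (k + 1) + 1, by rw [coefAxis_last]; push_cast; simp⟩
  | cast i =>
    rw [coefAxis_castSucc]
    induction i using Fin.lastCases with
    | last => exact ⟨2 * 2 ^ (k + 1) - 1, by rw [coef_castSucc_last]; push_cast; simp⟩
    | cast j => exact ⟨2 ^ ((j : ℕ) + 1), by rw [coef_castSucc_castSucc]; push_cast; simp⟩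

theorem single_mem_deltaPoly {i : Fin (k + 3)} {c : ℝ} (hc : 0 ≤ c)
    (hci : coef (k + 3) i * c ≤ 1) : Pi.single i c ∈ DeltaPoly (k + 3) := by
  refine ⟨fun j => ?_, (dotProduct_single _ _ _).trans_le hci⟩
  by_cases h : j = i
  · subst h; simpa using hc
  · simp [h]

theorem zero_mem_deltaPoly_inter_intPts : 0 ∈ DeltaPoly (k + 3) ∩ intPts (k + 3) :=
  ⟨⟨fun _ => le_rfl, by simp⟩, fun _ => ⟨0, by simp⟩⟩

theorem single_inv_coefAxis_mem (i : Fin (k + 3)) :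
    Pi.single i (coefAxis k i)⁻¹ ∈ DeltaPoly (k + 3) ∩ intPts (k + 3) := by
  have hpos := coefAxis_pos k i
  refine ⟨single_mem_deltaPoly k (inv_nonneg.2 hpos.le) ?_, ?_⟩
  · rw [← div_eq_mul_inv, div_le_one hpos]
    exact coef_le_coefAxis k i
  · obtain ⟨c, hc⟩ := exists_intCast_eq_inv_coefAxis k i
    rw [hc]
    exact single_mem_intPts i c

theorem cornerSimplex_coefAxis_subset :
    cornerSimplex (coefAxis k) ⊆ integerHull (DeltaPoly (k + 3)) :=
  cornerSimplex_subset convex_integerHull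
    (subset_integerHull (zero_mem_deltaPoly_inter_intPts k)) (coefAxis_pos k)
    fun i => subset_integerHull (single_inv_coefAxis_mem k i)

theorem isLatticePolytope_integerHull_deltaPoly :
    IsLatticePolytope (integerHull (DeltaPoly (k + 3))) :=
  isLatticePolytope_integerHull (isCompact_deltaPoly k).isBounded
    ⟨0, zero_mem_deltaPoly_inter_intPts k⟩

theorem isFullDim_integerHull_deltaPoly : IsFullDim (integerHull (DeltaPoly (k + 3))) :=
  affineSpan_eq_top_of_single_mem (subset_integerHull (zero_mem_deltaPoly_inter_intPts k))
    (fun i => inv_ne_zero (coefAxis_pos k i).ne')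
    fun i => subset_integerHull (single_inv_coefAxis_mem k i)

theorem hollow_integerHull_deltaPoly : Hollow (integerHull (DeltaPoly (k + 3))) :=
  (hollow_deltaPoly k).mono (integerHull_subset (convex_deltaPoly k))

theorem integerHull_deltaPoly_subset_last_le (hk : 1 ≤ k) :
    integerHull (DeltaPoly (k + 3)) ⊆ {x | x (Fin.last (k + 2)) ≤ 2 * 2 ^ (k + 1) + 1} := by
  refine convexHull_min (fun z ⟨hzΔ, hzℤ⟩ => ?_)
    ((convex_Iic _).linear_preimage (LinearMap.proj _))
  have hle := mul_le_one_of_mem_cornerSimplex (fun i => (coef_pos k i).le) hzΔ (Fin.last _)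
  rw [← le_div_iff₀' (coef_pos k _), one_div] at hle
  have := intPts_apply_le_of_lt_add_one hzℤ (Fin.last _) (b := 2 * 2 ^ (k + 1) + 1)
    (by push_cast; linarith [inv_coef_last_lt k hk])
  exact_mod_cast this

theorem integerHull_deltaPoly_ssubset (hk : 1 ≤ k) :
    integerHull (DeltaPoly (k + 3)) ⊂ DeltaPoly (k + 3) := by
  have hpos := coef_pos k (Fin.last _)
  refine (ssubset_iff_of_subset (integerHull_subset (convex_deltaPoly k))).2
    ⟨Pi.single (Fin.last _) (coef (k + 3) (Fin.last _))⁻¹,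
      single_mem_deltaPoly k (inv_nonneg.2 hpos.le) (mul_inv_cancel₀ hpos.ne').le, fun hmem => ?_⟩
  have := integerHull_deltaPoly_subset_last_le k hk hmem
  simp only [mem_ofPred_eq, Pi.single_eq_same] at this
  linarith [two_mul_two_pow_add_one_lt_inv_coef_last k]

noncomputable def facetPoint : Fin (k + 3) → ℝ :=
  Pi.single (Fin.last k).castSucc.castSucc 1 + Pi.single (Fin.last (k + 2)) (2 * 2 ^ (k + 1) - 1)

theorem facetPoint_last : facetPoint k (Fin.last (k + 2)) = 2 * 2 ^ (k + 1) - 1 := by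
  simp [facetPoint, Fin.ext_iff]

theorem facetPoint_le_one {j : Fin (k + 3)} (hj : j ≠ Fin.last (k + 2)) :
    facetPoint k j ≤ 1 := by
  simp only [facetPoint, Pi.add_apply, Pi.single_apply, hj, if_false, add_zero]
  split_ifs <;> norm_num

theorem coef_dotProduct_facetPoint : coef (k + 3) ⬝ᵥ facetPoint k = 1 := by
  have hx := two_le_two_pow_succ k
  rw [facetPoint, dotProduct_add, dotProduct_single, dotProduct_single, coef_castSucc_castSucc,
    coef_last, Fin.val_last]
  generalize (2 : ℝ) ^ (k + 1) = x at *
  have h1 : 2 * x - 1 ≠ 0 := by linarith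
  rw [div_mul_eq_mul_div _ _ (2 * x - 1), mul_div_mul_right _ _ h1]
  field_simp
  ring

theorem facetPoint_mem : facetPoint k ∈ DeltaPoly (k + 3) ∩ intPts (k + 3) := by
  have hx := two_le_two_pow_succ k
  refine ⟨⟨fun j => ?_, (coef_dotProduct_facetPoint k).le⟩, fun j => ?_⟩
  · simp only [facetPoint, Pi.add_apply, Pi.single_apply]
    split_ifs <;> linarith
  · simp only [facetPoint, Pi.add_apply, Pi.single_apply]
    split_ifs
    exacts [⟨1 + (2 * 2 ^ (k + 1) - 1), by push_cast; ring⟩, ⟨1, by simp⟩,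
      ⟨2 * 2 ^ (k + 1) - 1, by push_cast; ring⟩, ⟨0, by simp⟩]

theorem mem_integerHull_deltaPoly_of_sub_facetPoint {x : Fin (k + 3) → ℝ}
    (hlast : 0 ≤ x (Fin.last (k + 2)))
    (hy : ∀ j ≠ Fin.last (k + 2),
      0 ≤ (x - (x (Fin.last (k + 2)) / facetPoint k (Fin.last (k + 2))) • facetPoint k) j)
    (hx : coef (k + 3) ⬝ᵥ x < 1) : x ∈ integerHull (DeltaPoly (k + 3)) := by
  have hq : 0 < facetPoint k (Fin.last (k + 2)) := by
    rw [facetPoint_last]; linarith [two_le_two_pow_succ k]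
  set s := x (Fin.last (k + 2)) / facetPoint k (Fin.last (k + 2))
  set y := x - s • facetPoint k with hydef
  have hs : 0 ≤ s := div_nonneg hlast hq.le
  have hy_last : y (Fin.last (k + 2)) = 0 := by
    simp [y, s, hq.ne']
  have hy0 : ∀ j, 0 ≤ y j := fun j => by
    by_cases hj : j = Fin.last (k + 2)
    · rw [hj, hy_last]
    · exact hy j hj
  have hsum : coefAxis k ⬝ᵥ y = coef (k + 3) ⬝ᵥ x - s := by
    have : coefAxis k ⬝ᵥ y = coef (k + 3) ⬝ᵥ y := by
      simp only [dotProduct, Fin.sum_univ_castSucc, coefAxis_castSucc, hy_last, mul_zero]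
    rw [this, hydef, dotProduct_sub, dotProduct_smul, coef_dotProduct_facetPoint, smul_eq_mul,
      mul_one]
  have hy_nonneg : 0 ≤ coefAxis k ⬝ᵥ y :=
    Finset.sum_nonneg fun j _ => mul_nonneg (coefAxis_pos k j).le (hy0 j)
  have hs1 : 0 < 1 - s := by linarith
  have hy' : (1 - s)⁻¹ • y ∈ cornerSimplex (coefAxis k) := by
    refine ⟨fun j => mul_nonneg (inv_nonneg.2 hs1.le) (hy0 j), ?_⟩
    rw [dotProduct_smul, smul_eq_mul, hsum, inv_mul_le_one₀ hs1]
    linarith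
  have hxy : x = s • facetPoint k + (1 - s) • (1 - s)⁻¹ • y := by
    rw [smul_smul, mul_inv_cancel₀ hs1.ne', one_smul, hydef, add_sub_cancel]
  rw [hxy]
  exact convex_integerHull (subset_integerHull (facetPoint_mem k))
    (cornerSimplex_coefAxis_subset k hy') hs hs1.le (by ring)

theorem one_mem_interior_of_integerHull_deltaPoly_subset {Q : Set (Fin (k + 3) → ℝ)}
    (hQ : Convex ℝ Q) (hPQ : integerHull (DeltaPoly (k + 3)) ⊆ Q) {v : Fin (k + 3) → ℝ}
    (hv : v ∈ Q) (hv1 : 1 < coef (k + 3) ⬝ᵥ v) : 1 ∈ interior Q := by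
  have hx := two_le_two_pow_succ k
  have hq : 1 < facetPoint k (Fin.last (k + 2)) := by rw [facetPoint_last]; linarith
  set q := facetPoint k
  -- `U ∩ {coef ⬝ᵥ x < 1}` is the interior of the simplex spanned by `0`, `q` and the vertices
  -- `(coef j)⁻¹ • e j`, `j ≠ last`, of `Δ`; `1` lies on its facet in `coef ⬝ᵥ x = 1`.
  let U : Set (Fin (k + 3) → ℝ) := {x | 0 < x (Fin.last (k + 2)) ∧
    ∀ j ≠ Fin.last (k + 2), 0 < (x - (x (Fin.last (k + 2)) / q (Fin.last (k + 2))) • q) j}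
  have hU : IsOpen U := by
    simp only [U, ofPred_and, ofPred_forall]
    exact (isOpen_lt continuous_const (continuous_apply _)).inter <| isOpen_iInter_of_finite
      fun j => isOpen_iInter_of_finite fun _ => isOpen_lt continuous_const (by fun_prop)
  let φ := LinearMap.toContinuousLinearMap (dotProductBilin ℝ ℝ (coef (k + 3)))
  have hφ : ∀ x, φ x = coef (k + 3) ⬝ᵥ x := fun x => rfl
  refine hQ.mem_interior_of_open_inter_halfSpace_subset hU φ (c := 1)
    (fun x ⟨⟨hlast, hy⟩, hx⟩ => hPQ (mem_integerHull_deltaPoly_of_sub_facetPoint k hlast.le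
      (fun j hj => (hy j hj).le) ((hφ x).symm.trans_lt hx))) hv ⟨one_pos, fun j hj => ?_⟩ ?_ ?_
  · have := facetPoint_le_one k hj
    simp only [Pi.sub_apply, Pi.one_apply, Pi.smul_apply, smul_eq_mul]
    rw [sub_pos, one_div_mul_eq_div, div_lt_one (by linarith)]
    linarith
  · rw [hφ, dotProduct_one, sum_coef]
  · rwa [hφ, hφ, dotProduct_one, sum_coef]

theorem one_sub_single_mem_interior_of_integerHull_deltaPoly_subset
    {Q : Set (Fin (k + 3) → ℝ)} (hQ : Convex ℝ Q) (hPQ : integerHull (DeltaPoly (k + 3)) ⊆ Q)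
    {v : Fin (k + 3) → ℝ} (hv : v ∈ Q) {i : Fin (k + 3)} (hvi : v i < 0) : 1 - Pi.single i 1 ∈ interior Q := by
  let U : Set (Fin (k + 3) → ℝ) := {x | (∀ j ≠ i, 0 < x j) ∧ coefAxis k ⬝ᵥ x < 1}
  have hU : IsOpen U := by
    simp only [U, ofPred_and, ofPred_forall]
    exact (isOpen_iInter_of_finite fun j => isOpen_iInter_of_finite fun _ =>
      isOpen_lt continuous_const (continuous_apply j)).inter
      (isOpen_lt (continuous_const.dotProduct continuous_id) continuous_const)
  refine hQ.mem_interior_of_open_inter_halfSpace_subset hU (-ContinuousLinearMap.proj i)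
    (c := 0) (fun x ⟨⟨hpos, hx⟩, hxi⟩ => hPQ (cornerSimplex_coefAxis_subset k ⟨fun j => ?_, hx.le⟩))
    hv ⟨fun j hj => by simp [hj], ?_⟩ (by simp) (by simpa using hvi)
  · by_cases hj : j = i
    · simp only [mem_ofPred_eq, neg_apply, ContinuousLinearMap.proj_apply, neg_neg_iff_pos] at hxi
      exact hj ▸ hxi.le
    · exact (hpos j hj).le
  · rw [dotProduct_sub, dotProduct_one, dotProduct_single, mul_one]
    exact sum_coefAxis_sub_lt k i

theorem not_integerHull_deltaPoly_ssubset {Q : Set (Fin (k + 3) → ℝ)}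
    (hQ : IsLatticePolytope Q) (hQh : Hollow Q) : ¬ integerHull (DeltaPoly (k + 3)) ⊂ Q := by
  obtain ⟨V, -, -, hV, rfl⟩ := hQ
  intro hPQ
  obtain ⟨v, hvV, hvP⟩ : ∃ v ∈ V, v ∉ integerHull (DeltaPoly (k + 3)) := by
    by_contra! h
    exact hPQ.not_subset (convexHull_min h convex_integerHull)
  have hvQ := subset_convexHull ℝ V hvV
  have hint : ∀ w ∈ intPts (k + 3), w ∉ interior (convexHull ℝ V) :=
    fun w hw hwQ => eq_empty_iff_forall_notMem.1 hQh w ⟨hwQ, hw⟩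
  by_cases hneg : ∃ i, v i < 0
  · obtain ⟨i, hi⟩ := hneg
    refine hint _ (fun j => ⟨if j = i then 0 else 1, by by_cases hj : j = i <;> simp [hj]⟩)
      (one_sub_single_mem_interior_of_integerHull_deltaPoly_subset k (convex_convexHull ℝ V)
        hPQ.subset hvQ hi)
  · push Not at hneg
    have hv1 : 1 < coef (k + 3) ⬝ᵥ v := by
      by_contra! h
      exact hvP (subset_integerHull ⟨⟨hneg, h⟩, hV hvV⟩)
    exact hint 1 (fun _ => ⟨1, by simp⟩) (one_mem_interior_of_integerHull_deltaPoly_subset k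
      (convex_convexHull ℝ V) hPQ.subset hvQ hv1)

end Delta

/-- For every `d ≥ 4` there is a lattice `d`-polytope that is maximal as a hollow
lattice polytope but not maximal as a hollow convex body. -/
theorem exists_maximal_lattice_not_maximal_body (d : ℕ) (hd : 4 ≤ d) :
    ∃ P : Set (Fin d → ℝ), IsLatticePolytope P ∧ IsFullDim P ∧ Hollow P ∧
      (∀ Q : Set (Fin d → ℝ), IsLatticePolytope Q → IsFullDim Q → Hollow Q → ¬ P ⊂ Q) ∧
      ∃ K : Set (Fin d → ℝ), IsCompact K ∧ Convex ℝ K ∧ Hollow K ∧ P ⊂ K := by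
  obtain ⟨k, rfl⟩ : ∃ k, d = k + 3 := ⟨d - 3, by omega⟩
  exact ⟨integerHull (DeltaPoly (k + 3)), isLatticePolytope_integerHull_deltaPoly k,
    isFullDim_integerHull_deltaPoly k, hollow_integerHull_deltaPoly k,
    fun Q hQ _ hQh => not_integerHull_deltaPoly_ssubset k hQ hQh,
    DeltaPoly (k + 3), isCompact_deltaPoly k, convex_deltaPoly k, hollow_deltaPoly k,
    integerHull_deltaPoly_ssubset k (by omega)⟩
end

section
/- For every hollow lattice d-polytope P ⊂ ℝ^d there exist an integer d' with 1 ≤ d' ≤ d and a maximal hollow lattice d'-polytope Q ⊂ ℝ^{d'} such that the lattice width of P is at most the lattice width of Q. -/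
open MeasureTheory
open scoped ENNReal

/-!
If the hollow lattice polytopes containing `P` stay in a bounded region, there are only finitely
many of them, and a maximal one contains `P` and is at least as wide. Otherwise there are lattice
points `q` arbitrarily far away with `conv (P ∪ {q})` hollow, and a limit direction `v` of them
gives rays `x + ℝ≥0 • v` from the interior points `x` of `P` that avoid `ℤᵈ`. The closure of
`ℝ≥0 • v + ℤᵈ` is a closed subgroup containing the line `ℝ • v`; its discrete part has rank less
than `d`, so it also contains a rational line `ℝ • w`, `w ∈ ℤᵈ \ {0}`, and the lines `x + ℝ • w`
avoid `ℤᵈ` as well. Projecting along `w` by an integral map onto `ℤ^(d-1)` yields a hollow lattice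
`(d - 1)`-polytope at least as wide as `P`, and we conclude by induction on `d`.
-/

open Set Metric Filter Topology

section IntegerLattice

variable {n : ℕ}

abbrev intLattice (n : ℕ) : Submodule ℤ (Fin n → ℝ) :=
  Submodule.span ℤ (range (Pi.basisFun ℝ (Fin n)))

lemma mem_intPts_iff {x : Fin n → ℝ} : x ∈ intPts n ↔ ∃ z : Fin n → ℤ, Int.cast ∘ z = x :=
  ⟨fun hx => ⟨fun i => (hx i).choose, funext fun i => (hx i).choose_spec.symm⟩,
    fun ⟨z, hz⟩ i => ⟨z i, hz ▸ rfl⟩⟩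

lemma intCast_comp_mem_intPts (z : Fin n → ℤ) : (Int.cast ∘ z : Fin n → ℝ) ∈ intPts n :=
  mem_intPts_iff.2 ⟨z, rfl⟩

lemma coe_intLattice : (intLattice n : Set (Fin n → ℝ)) = intPts n := by
  ext x
  rw [SetLike.mem_coe, Module.Basis.mem_span_iff_repr_mem]
  simp [intPts, eq_comm]

lemma finite_intPts_inter {s : Set (Fin n → ℝ)} (hs : Bornology.IsBounded s) :
    (s ∩ intPts n).Finite :=
  coe_intLattice (n := n) ▸ ZSpan.setFinite_inter _ hs

end IntegerLattice

section Polytopes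

variable {n : ℕ} {P Q : Set (Fin n → ℝ)}

lemma IsLatticePolytope.isCompact (hP : IsLatticePolytope P) : IsCompact P := by
  obtain ⟨V, hV, -, -, rfl⟩ := hP
  exact hV.isCompact_convexHull (𝕜 := ℝ)

lemma IsLatticePolytope.convex (hP : IsLatticePolytope P) : Convex ℝ P := by
  obtain ⟨V, -, -, -, rfl⟩ := hP
  exact convex_convexHull ℝ V

lemma IsLatticePolytope.nonempty (hP : IsLatticePolytope P) : P.Nonempty := by
  obtain ⟨V, -, hV, -, rfl⟩ := hP
  exact hV.convexHull

lemma IsLatticePolytope.eq_convexHull_inter_intPts (hP : IsLatticePolytope P) :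
    P = convexHull ℝ (P ∩ intPts n) := by
  obtain ⟨V, -, -, hVint, rfl⟩ := hP
  refine le_antisymm (convexHull_mono fun v hv => ?_)
    (convexHull_min inter_subset_left (convex_convexHull ℝ V))
  exact ⟨subset_convexHull ℝ V hv, hVint hv⟩

lemma IsLatticePolytope.exists_intPts_norm_gt (hP : IsLatticePolytope P) {r : ℝ}
    (hr : ¬ P ⊆ closedBall 0 r) : ∃ q ∈ P ∩ intPts n, r < ‖q‖ := by
  contrapose! hr
  rw [hP.eq_convexHull_inter_intPts]
  exact convexHull_min (fun q hq => mem_closedBall_zero_iff.2 (hr q hq)) (convex_closedBall 0 r)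

lemma Hollow.mono_s10 (hQ : Hollow Q) (hPQ : P ⊆ Q) : Hollow P :=
  subset_empty_iff.1 (hQ ▸ inter_subset_inter_left _ (interior_mono hPQ))

lemma Hollow.notMem_intPts (hP : Hollow P) {x : Fin n → ℝ} (hx : x ∈ interior P) :
    x ∉ intPts n :=
  fun hxint => (eq_empty_iff_forall_notMem.1 hP) x ⟨hx, hxint⟩

lemma not_hollow_of_isLatticePolytope_fin_zero {P : Set (Fin 0 → ℝ)} (hP : IsLatticePolytope P) :
    ¬ Hollow P := by
  obtain ⟨x, hx⟩ := hP.nonempty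
  have hP_univ : P = univ := eq_univ_of_forall fun y => Subsingleton.elim x y ▸ hx
  intro hhollow
  refine hhollow.notMem_intPts (x := 0) ?_ fun i => i.elim0
  simp [hP_univ]

lemma latticeWidth_mono (hP : P.Nonempty) (hQ : IsCompact Q) (hPQ : P ⊆ Q) :
    latticeWidth P ≤ latticeWidth Q := by
  refine iInf_mono fun u => ENNReal.ofReal_le_ofReal ?_
  have hcont : Continuous fun x : Fin n → ℝ => ∑ i, (u.1 i : ℝ) * x i := by fun_prop
  have hbdd := hQ.image hcont
  exact sub_le_sub (csSup_le_csSup hbdd.bddAbove (hP.image _) (image_mono hPQ))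
    (csInf_le_csInf hbdd.bddBelow (hP.image _) (image_mono hPQ))

end Polytopes

section Maximal

variable {n : ℕ}

def IsHollowLatticePolytope (P : Set (Fin n → ℝ)) : Prop :=
  IsLatticePolytope P ∧ IsFullDim P ∧ Hollow P

/-- Finitely many lattice polytopes fit into a bounded region, each being the convex hull of its
lattice points. -/
lemma exists_maximal_of_bounded {P : Set (Fin n → ℝ)} (hP : IsHollowLatticePolytope P) {r : ℝ}
    (hr : ∀ R, IsHollowLatticePolytope R → P ⊆ R → R ⊆ closedBall 0 r) :
    ∃ Q, P ⊆ Q ∧ Maximal IsHollowLatticePolytope Q := by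
  set F := {R | IsHollowLatticePolytope R ∧ P ⊆ R}
  have hF : F.Finite := by
    have hball := finite_intPts_inter (isBounded_closedBall (x := (0 : Fin n → ℝ)) (r := r))
    refine Finite.of_finite_image (f := (· ∩ intPts n)) (hball.finite_subsets.subset ?_)
      fun R hR S hS hRS => ?_
    · rintro _ ⟨R, hR, rfl⟩ x hx
      exact ⟨hr R hR.1 hR.2 hx.1, hx.2⟩
    · rw [hR.1.1.eq_convexHull_inter_intPts, hS.1.1.eq_convexHull_inter_intPts]
      exact congrArg _ hRS
  obtain ⟨Q, hPQ, hQ⟩ := hF.exists_le_maximal (a := P) ⟨hP, subset_rfl⟩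
  exact ⟨Q, hPQ, hQ.prop.1, fun R hR hQR => hQ.2 ⟨hR, hPQ.trans hQR⟩ hQR⟩

end Maximal

section Tube

lemma ball_subset_convexHull_insert {E : Type*} [NormedAddCommGroup E] [NormedSpace ℝ E]
    {P : Set E} {x : E} {ρ : ℝ} (hx : ball x ρ ⊆ P) (q : E) {a : ℝ} (ha₀ : 0 ≤ a) (ha₁ : a < 1) :
    ball ((1 - a) • x + a • q) ((1 - a) * ρ) ⊆ convexHull ℝ (insert q P) := by
  intro y hy
  have ha : 0 < 1 - a := sub_pos.2 ha₁
  set p := x + (1 - a)⁻¹ • (y - ((1 - a) • x + a • q))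
  have hp : p ∈ ball x ρ := by
    rw [mem_ball, dist_eq_norm, add_sub_cancel_left, norm_smul, norm_inv, Real.norm_of_nonneg ha.le,
      inv_mul_lt_iff₀ ha, ← dist_eq_norm]
    exact hy
  have hy : (1 - a) • p + a • q = y := by
    simp only [p, smul_add, smul_smul, mul_inv_cancel₀ ha.ne', one_smul]
    abel
  exact hy ▸ convex_convexHull ℝ _ (subset_convexHull ℝ _ (mem_insert_of_mem q (hx hp)))
    (subset_convexHull ℝ _ (mem_insert q P)) ha.le ha₀ (sub_add_cancel 1 a)

variable {n : ℕ}

/-- For large `k`, `conv (P ∪ {q k})` contains a ball around `x + t • v`: the image of a ball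
around `x` in `P` under a homothety centred at `q k` with ratio close to `1`. -/
lemma add_smul_notMem_intPts_of_tendsto {P : Set (Fin n → ℝ)} {q : ℕ → Fin n → ℝ}
    {v : Fin n → ℝ} (hhollow : ∀ k, Hollow (convexHull ℝ (insert (q k) P)))
    (hnorm : Tendsto (fun k => ‖q k‖) atTop atTop)
    (hdir : Tendsto (fun k => ‖q k‖⁻¹ • q k) atTop (𝓝 v))
    {x : Fin n → ℝ} (hx : x ∈ interior P) {t : ℝ} (ht : 0 ≤ t) : x + t • v ∉ intPts n := by
  obtain ⟨ρ, hρ, hball⟩ := Metric.isOpen_iff.1 isOpen_interior x hx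
  set a : ℕ → ℝ := fun k => t * ‖q k‖⁻¹
  have ha : Tendsto a atTop (𝓝 0) := by
    simpa using hnorm.inv_tendsto_atTop.const_mul t
  have hc : Tendsto (fun k => (1 - a k) • x + a k • q k) atTop (𝓝 (x + t • v)) := by
    have h := (((tendsto_const_nhds (x := (1 : ℝ))).sub ha).smul
      (tendsto_const_nhds (x := x))).add (hdir.const_smul t)
    simp only [sub_zero, one_smul] at h
    simpa only [a, mul_smul] using h
  obtain ⟨k, hak, hck⟩ := ((ha.eventually (gt_mem_nhds one_half_pos)).and
    (hc.eventually (ball_mem_nhds (x + t • v) (half_pos hρ)))).exists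
  have ha₀ : 0 ≤ a k := mul_nonneg ht (inv_nonneg.2 (norm_nonneg _))
  have hmem : x + t • v ∈ ball ((1 - a k) • x + a k • q k) ((1 - a k) * ρ) := by
    rw [mem_ball, dist_comm]
    exact hck.trans_le (by nlinarith)
  refine (hhollow k).notMem_intPts (interior_maximal ?_ isOpen_ball hmem)
  exact ball_subset_convexHull_insert (hball.trans interior_subset) _ ha₀
    (hak.trans one_half_lt_one)

lemma exists_ray_notMem_intPts {P : Set (Fin n → ℝ)}
    (hfar : ∀ r : ℝ, ∃ q ∈ intPts n, r < ‖q‖ ∧ Hollow (convexHull ℝ (insert q P))) :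
    ∃ v ≠ 0, ∀ x ∈ interior P, ∀ t : ℝ, 0 ≤ t → x + t • v ∉ intPts n := by
  choose q _ hq_norm hq_hollow using fun k : ℕ => hfar k
  have hq₀ : ∀ k, q k ≠ 0 := fun k h => by
    simpa [h] using (Nat.cast_nonneg (α := ℝ) k).trans_lt (hq_norm k)
  obtain ⟨v, hv, φ, hφ, hdir⟩ := (isCompact_sphere (0 : Fin n → ℝ) 1).tendsto_subseq
    (x := fun k => ‖q k‖⁻¹ • q k) fun k => by simp [norm_smul, hq₀ k]
  have hnorm : Tendsto (fun k => ‖q (φ k)‖) atTop atTop :=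
    tendsto_atTop_mono (fun k => (hq_norm (φ k)).le.trans' (by exact_mod_cast hφ.le_apply))
      tendsto_natCast_atTop_atTop
  exact ⟨v, ne_zero_of_mem_unit_sphere ⟨v, hv⟩, fun x hx t ht =>
    add_smul_notMem_intPts_of_tendsto (fun k => hq_hollow (φ k)) hnorm hdir hx ht⟩

end Tube

section ClosedSubgroups

variable {E : Type*} [NormedAddCommGroup E] [NormedSpace ℝ E]

def AddSubgroup.linealitySpace (H : AddSubgroup E) : Submodule ℝ E where
  carrier := {x | ∀ s : ℝ, s • x ∈ H}
  add_mem' hx hy s := by rw [smul_add]; exact H.add_mem (hx s) (hy s)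
  zero_mem' s := by rw [smul_zero]; exact H.zero_mem
  smul_mem' c _ hx s := by rw [smul_smul]; exact hx (s * c)

lemma tendsto_floor_div_mul_self {α : Type*} {l : Filter α} {r : α → ℝ}
    (hr : Tendsto r l (𝓝 0)) (hpos : ∀ k, 0 < r k) (s : ℝ) :
    Tendsto (fun k => (⌊s / r k⌋ : ℝ) * r k) l (𝓝 s) := by
  have hlow : Tendsto (fun k => s - r k) l (𝓝 s) := by simpa using tendsto_const_nhds.sub hr
  refine tendsto_of_tendsto_of_tendsto_of_le_of_le hlow tendsto_const_nhds (fun k => ?_) fun k => ?_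
  · have := Int.lt_floor_add_one (s / r k)
    rw [div_lt_iff₀ (hpos k)] at this
    linarith
  · exact (le_div_iff₀ (hpos k)).1 (Int.floor_le _)

/-- Rescaled integer multiples of ever shorter nonzero elements of `H` approximate every point
of a limit line of their directions. -/
lemma AddSubgroup.linealitySpace_ne_bot [FiniteDimensional ℝ E] {H : AddSubgroup E}
    (hH : IsClosed (H : Set E)) (hsmall : ∀ ε > 0, ∃ x ∈ H, x ≠ 0 ∧ ‖x‖ < ε) :
    H.linealitySpace ≠ ⊥ := by
  choose x hxH hx0 hxε using fun k : ℕ => hsmall (1 / (k + 1)) Nat.one_div_pos_of_nat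
  have hr : Tendsto (fun k => ‖x k‖) atTop (𝓝 0) :=
    squeeze_zero (fun k => norm_nonneg _) (fun k => (hxε k).le)
      tendsto_one_div_add_atTop_nhds_zero_nat
  have hpos : ∀ k, 0 < ‖x k‖ := fun k => norm_pos_iff.2 (hx0 k)
  obtain ⟨u, hu, φ, hφ, hlim⟩ := (isCompact_sphere (0 : E) 1).tendsto_subseq
    (x := fun k => ‖x k‖⁻¹ • x k) fun k => by simp [norm_smul, (hpos k).ne']
  refine (Submodule.ne_bot_iff _).2 ⟨u, fun s => ?_, ne_zero_of_mem_unit_sphere ⟨u, hu⟩⟩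
  refine hH.mem_of_tendsto
    ((tendsto_floor_div_mul_self (hr.comp hφ.tendsto_atTop) (fun k => hpos _) s).smul hlim)
    (Eventually.of_forall fun k => ?_)
  simp only [Function.comp_apply, smul_smul, mul_assoc, mul_inv_cancel₀ (hpos _).ne', mul_one,
    Int.cast_smul_eq_zsmul]
  exact H.zsmul_mem (hxH _) _

lemma exists_int_relation_of_discreteTopology [FiniteDimensional ℝ E] {ι : Type*} [Fintype ι]
    {f : ι → E} (hdisc : DiscreteTopology (Submodule.span ℤ (range f)))
    (hrank : Module.finrank ℝ (Submodule.span ℝ (range f)) < Fintype.card ι) :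
    ∃ c : ι → ℤ, c ≠ 0 ∧ ∑ i, c i • f i = 0 := by
  have hrank' : Set.finrank ℤ (range f) < Fintype.card ι :=
    Real.finrank_eq_int_finrank_of_discrete hdisc ▸ hrank
  obtain ⟨c, hc, i, hi⟩ := Fintype.not_linearIndependent_iff.1 fun hli =>
    (finrank_span_eq_card hli).not_lt hrank'
  exact ⟨c, fun h => hi (congrFun h i), hc⟩

end ClosedSubgroups

section RationalLine

variable {n : ℕ}

/-- Project along `W = H.linealitySpace` onto a complement `U`: the image of `ℤⁿ` lies in the
closed subgroup `H ⊓ U`, which has no lines and hence is discrete, so its real span is too small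
for the `n` images of the unit vectors to be independent over `ℤ`. -/
lemma AddSubgroup.exists_intCast_mem_linealitySpace {H : AddSubgroup (Fin n → ℝ)}
    (hH : IsClosed (H : Set (Fin n → ℝ))) (hint : intPts n ⊆ H) (hW : H.linealitySpace ≠ ⊥) :
    ∃ w : Fin n → ℤ, w ≠ 0 ∧ (Int.cast ∘ w : Fin n → ℝ) ∈ H.linealitySpace := by
  set W := H.linealitySpace
  obtain ⟨U, hWU⟩ := W.exists_isCompl
  set p := U.projection W hWU.symm
  have hp_mem : ∀ x ∈ H, p x ∈ H ⊓ U.toAddSubgroup := fun x hx => by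
    refine ⟨?_, Submodule.projection_apply_mem _ x⟩
    rw [Submodule.projection_eq_self_sub_projection]
    simpa using H.sub_mem hx (Submodule.projection_apply_mem hWU x 1)
  obtain ⟨ε, hε, hsep⟩ : ∃ ε > 0, ∀ x ∈ H ⊓ U.toAddSubgroup, x ≠ 0 → ε ≤ ‖x‖ := by
    by_contra! hsmall
    refine linealitySpace_ne_bot (hH.inter U.closed_of_finiteDimensional) hsmall ?_
    refine (Submodule.eq_bot_iff _).2 fun x hx => hWU.disjoint.le_bot ⟨fun s => (hx s).1, ?_⟩
    simpa using (hx 1).2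
  set f : Fin n → (Fin n → ℝ) := fun i => p (Pi.single i 1)
  have hspan : Submodule.span ℤ (range f) ≤ (H ⊓ U.toAddSubgroup).toIntSubmodule :=
    Submodule.span_le.2 <| range_subset_iff.2 fun i => hp_mem _ <| hint fun j =>
      ⟨(Pi.single i 1 : Fin n → ℤ) j, by rcases eq_or_ne j i with rfl | h <;> simp [*]⟩
  have hdisc : DiscreteTopology (Submodule.span ℤ (range f)) :=
    DiscreteTopology.of_forall_le_norm hε fun x hx => hsep x (hspan x.2) fun h => hx (Subtype.ext h)
  have hrank : Module.finrank ℝ (Submodule.span ℝ (range f)) < Fintype.card (Fin n) := by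
    have hU : Module.finrank ℝ U < n := by
      have := Submodule.finrank_add_eq_of_isCompl hWU
      have := Submodule.finrank_eq_zero.not.2 hW
      simp only [Module.finrank_fin_fun] at *
      omega
    rw [Fintype.card_fin]
    exact (Submodule.finrank_mono (Submodule.span_le.2 (range_subset_iff.2 fun i =>
      Submodule.projection_apply_mem _ _))).trans_lt hU
  obtain ⟨c, hc₀, hc⟩ := exists_int_relation_of_discreteTopology hdisc hrank
  refine ⟨c, hc₀, ?_⟩
  have hc_sum : (Int.cast ∘ c : Fin n → ℝ) = ∑ i, c i • Pi.single i 1 := by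
    ext j
    simp [Finset.sum_apply, Pi.single_apply]
  rw [← Submodule.projection_apply_eq_zero_iff hWU.symm, hc_sum, map_sum]
  simpa only [map_zsmul] using hc

end RationalLine

section RayClosure

variable {n : ℕ}

def rayAddIntPts (v : Fin n → ℝ) : Set (Fin n → ℝ) :=
  {y | ∃ t : ℝ, 0 ≤ t ∧ ∃ z ∈ intPts n, t • v + z = y}

/-- Two of the multiples `(k * max T 1) • v`, `k : ℕ`, agree modulo `ℤⁿ` up to `δ`, by compactness
of the unit cube. -/
lemma exists_smul_near_intPts (v : Fin n → ℝ) {δ : ℝ} (hδ : 0 < δ) (T : ℝ) :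
    ∃ s ≥ T, ∃ z ∈ intPts n, ‖s • v - z‖ < δ := by
  set T₁ := max T 1
  set fl : ℕ → Fin n → ℤ := fun k i => ⌊k * T₁ * v i⌋
  set b : ℕ → Fin n → ℝ := fun k => (k * T₁) • v - Int.cast ∘ fl k
  have hb : ∀ k, b k ∈ Icc 0 1 := fun k =>
    ⟨fun i => Int.fract_nonneg (k * T₁ * v i), fun i => (Int.fract_lt_one (k * T₁ * v i)).le⟩
  obtain ⟨a, -, φ, hφ, hlim⟩ := isCompact_Icc.tendsto_subseq hb
  obtain ⟨K, hK⟩ := eventually_atTop.1 (hlim.eventually (ball_mem_nhds a (half_pos hδ)))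
  have hgap : (1 : ℝ) ≤ φ (K + 1) - φ K := by
    have : φ K + 1 ≤ φ (K + 1) := hφ (Nat.lt_succ_self K)
    have : (φ K : ℝ) + 1 ≤ φ (K + 1) := by exact_mod_cast this
    linarith
  refine ⟨(φ (K + 1) - φ K : ℝ) * T₁, ?_, Int.cast ∘ (fl (φ (K + 1)) - fl (φ K)),
    intCast_comp_mem_intPts _, ?_⟩
  · nlinarith [le_max_left T 1, le_max_right T 1]
  · have hdiff : ((φ (K + 1) - φ K : ℝ) * T₁) • v - Int.cast ∘ (fl (φ (K + 1)) - fl (φ K)) =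
        b (φ (K + 1)) - b (φ K) := by
      ext i
      simp only [b, Pi.sub_apply, Pi.smul_apply, Function.comp_apply, Int.cast_sub, smul_eq_mul]
      ring
    rw [hdiff, ← dist_eq_norm]
    have h₁ : dist (b (φ (K + 1))) a < δ / 2 := hK (K + 1) (Nat.le_succ K)
    have h₂ : dist (b (φ K)) a < δ / 2 := hK K le_rfl
    linarith [dist_triangle_right (b (φ (K + 1))) (b (φ K)) a]

lemma smul_add_mem_closure_rayAddIntPts (v : Fin n → ℝ) (t : ℝ) {z : Fin n → ℝ}
    (hz : z ∈ intPts n) : t • v + z ∈ closure (rayAddIntPts v) := by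
  refine Metric.mem_closure_iff.2 fun ε hε => ?_
  obtain ⟨s, hs, z', hz', hnear⟩ := exists_smul_near_intPts v hε (-t)
  refine ⟨(t + s) • v + (z - z'), ⟨t + s, by linarith, z - z', ?_, rfl⟩, ?_⟩
  · rw [← coe_intLattice] at hz hz' ⊢
    exact sub_mem hz hz'
  · have hdiff : t • v + z - ((t + s) • v + (z - z')) = -(s • v - z') := by
      rw [add_smul]
      abel
    rwa [dist_eq_norm, hdiff, norm_neg]

/-- The closure of the ray-plus-lattice set is a closed subgroup containing `ℝ • v`, whose
lineality space therefore meets `ℤⁿ`. -/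
lemma exists_intCast_line_subset_closure_rayAddIntPts {v : Fin n → ℝ} (hv : v ≠ 0) :
    ∃ w : Fin n → ℤ, w ≠ 0 ∧ ∀ s : ℝ, s • (Int.cast ∘ w) ∈ closure (rayAddIntPts v) := by
  set G := (ℝ ∙ v).toAddSubgroup ⊔ (intLattice n).toAddSubgroup
  have hG : (G : Set (Fin n → ℝ)) ⊆ closure (rayAddIntPts v) := by
    intro y hy
    obtain ⟨_, ha, z, hz, rfl⟩ := AddSubgroup.mem_sup.1 hy
    obtain ⟨t, rfl⟩ := Submodule.mem_span_singleton.1 ha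
    exact smul_add_mem_closure_rayAddIntPts v t (coe_intLattice (n := n) ▸ hz)
  have hint : intPts n ⊆ G.topologicalClosure := fun z hz =>
    G.le_topologicalClosure (AddSubgroup.mem_sup_right (by rwa [← coe_intLattice] at hz))
  have hvW : v ∈ G.topologicalClosure.linealitySpace := fun s =>
    G.le_topologicalClosure <| AddSubgroup.mem_sup_left <|
      Submodule.smul_mem _ s (Submodule.mem_span_singleton_self v)
  obtain ⟨w, hw, hwW⟩ := AddSubgroup.exists_intCast_mem_linealitySpace
    G.isClosed_topologicalClosure hint ((Submodule.ne_bot_iff _).2 ⟨v, hvW, hv⟩)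
  exact ⟨w, hw, fun s => closure_minimal hG isClosed_closure (hwW s)⟩

lemma isClosed_setOf_forall_add_notMem {E : Type*} [AddGroup E] [TopologicalSpace E]
    [IsTopologicalAddGroup E] {U : Set E} (hU : IsOpen U) (S : Set E) :
    IsClosed {y | ∀ x ∈ U, x + y ∉ S} := by
  have hcompl : {y | ∀ x ∈ U, x + y ∉ S}ᶜ = ⋃ s ∈ S, (s - ·) ⁻¹' U := by
    ext y
    simp only [mem_compl_iff, mem_ofPred_eq, not_forall, not_not, mem_iUnion, mem_preimage,
      exists_prop]
    constructor
    · rintro ⟨x, hx, hxy⟩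
      exact ⟨x + y, hxy, by simpa using hx⟩
    · rintro ⟨s, hs, hsy⟩
      exact ⟨s - y, hsy, by simpa using hs⟩
  rw [← isOpen_compl_iff, hcompl]
  exact isOpen_biUnion fun s _ => hU.preimage (continuous_const.sub continuous_id)

lemma add_notMem_intPts_of_mem_closure {P : Set (Fin n → ℝ)} {v : Fin n → ℝ}
    (hray : ∀ x ∈ interior P, ∀ t : ℝ, 0 ≤ t → x + t • v ∉ intPts n) {y : Fin n → ℝ}
    (hy : y ∈ closure (rayAddIntPts v)) {x : Fin n → ℝ} (hx : x ∈ interior P) :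
    x + y ∉ intPts n := by
  refine closure_minimal (fun y hy x hx hxy => ?_)
    (isClosed_setOf_forall_add_notMem isOpen_interior (intPts n)) hy x hx
  obtain ⟨t, ht, z, hz, rfl⟩ := hy
  refine hray x hx t ht ?_
  rw [← coe_intLattice] at hz hxy ⊢
  simpa [← add_assoc] using sub_mem hxy hz

end RayClosure

section LatticeProjection

/-- Euclid's algorithm on the coordinates of `w`, performed by integral transvections. -/
lemma exists_linearEquiv_apply_eq_single {ι : Type*} [Fintype ι] [DecidableEq ι] [Nonempty ι]
    (w : ι → ℤ) : ∃ (e : (ι → ℤ) ≃ₗ[ℤ] (ι → ℤ)) (i : ι) (c : ℤ), e w = Pi.single i c := by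
  induction hN : ∑ i, (w i).natAbs using Nat.strong_induction_on generalizing w with
  | _ N ih =>
  by_cases hsupp : ∃ a b, a ≠ b ∧ w b ≠ 0 ∧ (w b).natAbs ≤ (w a).natAbs
  · obtain ⟨a, b, hab, hb, hba⟩ := hsupp
    set e₁ := LinearEquiv.transvection (R := ℤ)
      (f := -(w a / w b) • (LinearMap.proj b : (ι → ℤ) →ₗ[ℤ] ℤ)) (v := Pi.single a 1)
      (by simp [hab.symm])
    have he₁ : e₁ w = Function.update w a (w a % w b) := by
      ext j
      rcases eq_or_ne j a with rfl | hj
      · simp [e₁, LinearMap.transvection.apply, Int.emod_def]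
        ring
      · simp [e₁, LinearMap.transvection.apply, hj]
    have hlt : ∑ i, (e₁ w i).natAbs < N := by
      have := Int.emod_lt (w a) hb
      have := Int.emod_nonneg (w a) hb
      rw [← hN, he₁]
      refine Finset.sum_lt_sum (fun j _ => ?_) ⟨a, Finset.mem_univ a, ?_⟩
      · rcases eq_or_ne j a with rfl | hj
        · simp only [Function.update_self]
          omega
        · simp [hj]
      · simp only [Function.update_self]
        omega
    obtain ⟨e, i, c, he⟩ := ih _ hlt (e₁ w) rfl
    exact ⟨e₁.trans e, i, c, he⟩
  · obtain ⟨i, hi⟩ := Finite.exists_max fun j => (w j).natAbs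
    refine ⟨LinearEquiv.refl ℤ _, i, w i, funext fun j => ?_⟩
    rcases eq_or_ne j i with rfl | hj
    · simp
    · by_contra h
      exact hsupp ⟨i, j, hj.symm, by simpa [hj] using h, hi j⟩

lemma exists_intMatrix_surjective_mulVec_eq_zero {m : ℕ} (w : Fin (m + 1) → ℤ) :
    ∃ M : Matrix (Fin m) (Fin (m + 1)) ℤ, Function.Surjective M.mulVec ∧ M.mulVec w = 0 := by
  obtain ⟨e, i, c, he⟩ := exists_linearEquiv_apply_eq_single w
  set f := LinearMap.funLeft ℤ ℤ i.succAbove ∘ₗ e.toLinearMap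
  refine ⟨LinearMap.toMatrix' f, ?_, ?_⟩
  · rw [show (LinearMap.toMatrix' f).mulVec = f from funext (LinearMap.toMatrix'_mulVec f)]
    exact (LinearMap.funLeft_surjective_of_injective (R := ℤ) (M := ℤ) _
      Fin.succAbove_right_injective).comp e.surjective
  · rw [LinearMap.toMatrix'_mulVec]
    ext j
    simp [f, he, Fin.succAbove_ne]

end LatticeProjection

section IntegralProjection

variable {m n : ℕ}

lemma map_intCast_mulVec (M : Matrix (Fin m) (Fin n) ℤ) (z : Fin n → ℤ) :
    (M.map (Int.cast : ℤ → ℝ)).mulVec (Int.cast ∘ z) = Int.cast ∘ M.mulVec z :=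
  funext fun i => ((Int.castRingHom ℝ).map_mulVec M z i).symm

lemma mapsTo_map_intCast_mulVec (M : Matrix (Fin m) (Fin n) ℤ) :
    MapsTo (M.map (Int.cast : ℤ → ℝ)).mulVec (intPts n) (intPts m) := by
  intro x hx
  obtain ⟨z, rfl⟩ := mem_intPts_iff.1 hx
  rw [map_intCast_mulVec]
  exact intCast_comp_mem_intPts _

lemma intPts_subset_image_map_intCast_mulVec {M : Matrix (Fin m) (Fin n) ℤ}
    (hM : Function.Surjective M.mulVec) :
    intPts m ⊆ (M.map (Int.cast : ℤ → ℝ)).mulVec '' intPts n := by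
  intro y hy
  obtain ⟨u, rfl⟩ := mem_intPts_iff.1 hy
  obtain ⟨z, rfl⟩ := hM u
  exact ⟨_, intCast_comp_mem_intPts z, map_intCast_mulVec M z⟩

lemma surjective_map_intCast_mulVec {M : Matrix (Fin m) (Fin n) ℤ}
    (hM : Function.Surjective M.mulVec) :
    Function.Surjective (M.map (Int.cast : ℤ → ℝ)).mulVec := by
  obtain ⟨B, hB⟩ := Matrix.mulVec_surjective_iff_exists_right_inverse.1 hM
  refine Matrix.mulVec_surjective_iff_exists_right_inverse.2 ⟨B.map (Int.castRingHom ℝ), ?_⟩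
  have hB' := congrArg (Matrix.map · (Int.castRingHom ℝ)) hB
  rw [Matrix.map_mul, Matrix.map_one _ (map_zero _) (map_one _)] at hB'
  simpa using hB'

lemma ker_map_intCast_mulVecLin {M : Matrix (Fin m) (Fin (m + 1)) ℤ}
    (hM : Function.Surjective M.mulVec) {w : Fin (m + 1) → ℤ} (hw : M.mulVec w = 0)
    (hw₀ : w ≠ 0) :
    LinearMap.ker (M.map (Int.cast : ℤ → ℝ)).mulVecLin = ℝ ∙ (Int.cast ∘ w) := by
  have hw₀' : (Int.cast ∘ w : Fin (m + 1) → ℝ) ≠ 0 := fun h =>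
    hw₀ (funext fun i => by simpa using congrFun h i)
  refine (Submodule.eq_of_le_of_finrank_eq ((Submodule.span_singleton_le_iff_mem _ _).2 ?_) ?_).symm
  · simp [map_intCast_mulVec, hw]
  · have := LinearMap.finrank_range_add_finrank_ker (M.map (Int.cast : ℤ → ℝ)).mulVecLin
    rw [LinearMap.range_eq_top.2 (surjective_map_intCast_mulVec hM), finrank_top,
      Module.finrank_fin_fun, Module.finrank_fin_fun] at this
    rw [finrank_span_singleton hw₀']
    omega

lemma latticeWidth_le_latticeWidth_image {M : Matrix (Fin m) (Fin n) ℤ}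
    (hM : Function.Surjective M.mulVec) (K : Set (Fin n → ℝ)) :
    latticeWidth K ≤ latticeWidth ((M.map (Int.cast : ℤ → ℝ)).mulVec '' K) := by
  refine le_iInf fun u' => ?_
  have hu : Matrix.vecMul u'.1 M ≠ 0 := by
    obtain ⟨z, hz⟩ := hM u'.1
    intro h
    have := Matrix.dotProduct_mulVec u'.1 M z
    rw [h, zero_dotProduct, hz] at this
    exact u'.2 (dotProduct_self_eq_zero.1 this)
  refine iInf_le_of_le ⟨_, hu⟩ (le_of_eq ?_)
  have hfun : ∀ x : Fin n → ℝ, ∑ j, (u'.1 j : ℝ) * (M.map Int.cast).mulVec x j =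
      ∑ i, ((Matrix.vecMul u'.1 M i : ℤ) : ℝ) * x i := fun x => by
    have := Matrix.dotProduct_mulVec (Int.cast ∘ u'.1) (M.map (Int.cast : ℤ → ℝ)) x
    simp only [dotProduct, Function.comp_apply] at this
    rw [this]
    congr! 2 with i
    simpa using ((Int.castRingHom ℝ).map_vecMul M u'.1 i).symm
  rw [image_image]
  simp only [hfun]

end IntegralProjection

section LinearImage

variable {m n : ℕ} {P : Set (Fin n → ℝ)} (π : (Fin n → ℝ) →ₗ[ℝ] (Fin m → ℝ))

lemma IsLatticePolytope.image (hP : IsLatticePolytope P) (hπ : MapsTo π (intPts n) (intPts m)) :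
    IsLatticePolytope (π '' P) := by
  obtain ⟨V, hV, hVne, hVint, rfl⟩ := hP
  exact ⟨π '' V, hV.image π, hVne.image π, (hπ.mono_left hVint).image_subset,
    π.image_convexHull V⟩

lemma IsFullDim.image (hP : IsFullDim P) (hπ : Function.Surjective π) : IsFullDim (π '' P) :=
  AffineMap.span_eq_top_of_surjective π.toAffineMap hπ hP

lemma interior_image_subset_image_interior (hP : Convex ℝ P) (hint : (interior P).Nonempty)
    (hπ : Function.Surjective π) : interior (π '' P) ⊆ π '' interior P := by
  have hopen : IsOpen (π '' interior P) := π.isOpenMap_of_finiteDimensional hπ _ isOpen_interior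
  have hdense : π '' P ⊆ closure (π '' interior P) := calc
    π '' P ⊆ π '' closure (interior P) :=
      image_mono (hP.closure_interior_eq_closure_of_nonempty_interior hint ▸ subset_closure)
    _ ⊆ closure (π '' interior P) :=
      image_closure_subset_closure_image π.continuous_of_finiteDimensional
  calc interior (π '' P) ⊆ interior (closure (π '' interior P)) := interior_mono hdense
    _ = π '' interior P := by
      rw [(hP.interior.linear_image π).interior_closure_eq_interior_of_nonempty_interior
        (hopen.interior_eq.symm ▸ hint.image π), hopen.interior_eq]

lemma Hollow.image_of_ker_le (hP : Convex ℝ P) (hint : (interior P).Nonempty)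
    (hπ : Function.Surjective π) (hlift : intPts m ⊆ π '' intPts n) {w : Fin n → ℝ}
    (hker : LinearMap.ker π ≤ ℝ ∙ w) (hline : ∀ x ∈ interior P, ∀ s : ℝ, x + s • w ∉ intPts n) :
    Hollow (π '' P) := by
  refine eq_empty_iff_forall_notMem.2 fun y ⟨hy, hyint⟩ => ?_
  obtain ⟨x, hx, rfl⟩ := interior_image_subset_image_interior π hP hint hπ hy
  obtain ⟨z, hz, hzx⟩ := hlift hyint
  obtain ⟨s, hs⟩ := Submodule.mem_span_singleton.1 (hker (by simp [hzx] : z - x ∈ LinearMap.ker π))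
  exact hline x hx s (by rwa [hs, add_sub_cancel])

end LinearImage

section Reduction

variable {m : ℕ}

lemma exists_projection_of_ray_notMem_intPts {P : Set (Fin (m + 1) → ℝ)}
    (hP : IsLatticePolytope P) (hfull : IsFullDim P) {v : Fin (m + 1) → ℝ} (hv : v ≠ 0)
    (hray : ∀ x ∈ interior P, ∀ t : ℝ, 0 ≤ t → x + t • v ∉ intPts (m + 1)) :
    ∃ T : Set (Fin m → ℝ), IsHollowLatticePolytope T ∧ latticeWidth P ≤ latticeWidth T := by
  obtain ⟨w, hw₀, hw⟩ := exists_intCast_line_subset_closure_rayAddIntPts hv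
  obtain ⟨M, hM, hMw⟩ := exists_intMatrix_surjective_mulVec_eq_zero w
  set π := (M.map (Int.cast : ℤ → ℝ)).mulVecLin
  have hπ : Function.Surjective π := surjective_map_intCast_mulVec hM
  have hint := hP.convex.interior_nonempty_iff_affineSpan_eq_top.2 hfull
  have hhollow : Hollow (π '' P) :=
    Hollow.image_of_ker_le π hP.convex hint hπ (intPts_subset_image_map_intCast_mulVec hM)
      (ker_map_intCast_mulVecLin hM hMw hw₀).le
      fun x hx s => add_notMem_intPts_of_mem_closure hray (hw s) hx
  exact ⟨π '' P, ⟨hP.image π (mapsTo_map_intCast_mulVec M), hfull.image π hπ, hhollow⟩,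
    latticeWidth_le_latticeWidth_image hM P⟩

lemma exists_maximal_or_exists_projection {P : Set (Fin (m + 1) → ℝ)}
    (hP : IsHollowLatticePolytope P) :
    (∃ Q : Set (Fin (m + 1) → ℝ),
      Maximal IsHollowLatticePolytope Q ∧ latticeWidth P ≤ latticeWidth Q) ∨
      ∃ T : Set (Fin m → ℝ), IsHollowLatticePolytope T ∧ latticeWidth P ≤ latticeWidth T := by
  by_cases hbdd : ∃ r : ℝ, ∀ R, IsHollowLatticePolytope R → P ⊆ R → R ⊆ closedBall 0 r
  · obtain ⟨r, hr⟩ := hbdd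
    obtain ⟨Q, hPQ, hQ⟩ := exists_maximal_of_bounded hP hr
    exact .inl ⟨Q, hQ, latticeWidth_mono hP.1.nonempty hQ.prop.1.isCompact hPQ⟩
  · push Not at hbdd
    obtain ⟨v, hv, hray⟩ := exists_ray_notMem_intPts fun r => by
      obtain ⟨R, hR, hPR, hRr⟩ := hbdd r
      obtain ⟨q, ⟨hqR, hq⟩, hqr⟩ := hR.1.exists_intPts_norm_gt hRr
      exact ⟨q, hq, hqr, hR.2.2.mono_s10 (convexHull_min (insert_subset hqR hPR) hR.1.convex)⟩
    exact .inr (exists_projection_of_ray_notMem_intPts hP.1 hP.2.1 hv hray)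

theorem exists_maximal_latticeWidth_le : ∀ (d : ℕ) {P : Set (Fin d → ℝ)},
    IsHollowLatticePolytope P → ∃ d', 1 ≤ d' ∧ d' ≤ d ∧ ∃ Q : Set (Fin d' → ℝ),
      Maximal IsHollowLatticePolytope Q ∧ latticeWidth P ≤ latticeWidth Q
  | 0, _, hP => absurd hP.2.2 (not_hollow_of_isLatticePolytope_fin_zero hP.1)
  | d + 1, _, hP => by
    rcases exists_maximal_or_exists_projection hP with ⟨Q, hQ, hPQ⟩ | ⟨T, hT, hPT⟩
    · exact ⟨d + 1, by omega, le_rfl, Q, hQ, hPQ⟩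
    · obtain ⟨d', hd'₁, hd', Q, hQ, hTQ⟩ := exists_maximal_latticeWidth_le d hT
      exact ⟨d', hd'₁, by omega, Q, hQ, hPT.trans hTQ⟩

end Reduction

/-- For every hollow lattice `d`-polytope `P` there are `1 ≤ d' ≤ d` and a maximal
hollow lattice `d'`-polytope `Q` with `latticeWidth P ≤ latticeWidth Q`. -/
theorem latticeWidth_le_maximal (d : ℕ) (P : Set (Fin d → ℝ))
    (hP : IsLatticePolytope P) (hfull : IsFullDim P) (hhollow : Hollow P) :
    ∃ d' : ℕ, 1 ≤ d' ∧ d' ≤ d ∧ ∃ Q : Set (Fin d' → ℝ),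
      IsLatticePolytope Q ∧ IsFullDim Q ∧ Hollow Q ∧
      (∀ R : Set (Fin d' → ℝ), IsLatticePolytope R → IsFullDim R → Hollow R → ¬ Q ⊂ R) ∧
      latticeWidth P ≤ latticeWidth Q := by
  obtain ⟨d', hd'₁, hd', Q, hQ, hPQ⟩ := exists_maximal_latticeWidth_le d ⟨hP, hfull, hhollow⟩
  exact ⟨d', hd'₁, hd', Q, hQ.prop.1, hQ.prop.2.1, hQ.prop.2.2,
    fun R hR hRfull hRhollow => hQ.not_gt ⟨hR, hRfull, hRhollow⟩, hPQ⟩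
end

section
/- (Kannan–Lovász theorem, lattice polytope version.) Let s ≥ 1 be an integer and let P ⊂ ℝ^d be an s-hollow lattice d-polytope. Let 0 = Δ_0 < Δ_1 < ⋯ < Δ_d ≤ 1 be real numbers. Then there exist an index i ∈ {0, …, d−1} and a surjective affine map π : ℝ^d → ℝ^{d−i} with π(ℤ^d) = ℤ^{d−i} whose kernel direction space is spanned by vectors in sℤ^d, such that: (1) no point w ∈ interior(π(P)) ∩ sℤ^{d−i} is δ-central in π(P) for any δ > Δ_i; and (2) the (d−i)-dimensional Lebesgue volume of π(P) is at most s^{d−i}/(Δ_{i+1} − Δ_i)^{d−i}. -/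
open MeasureTheory
open scoped ENNReal

/-!
Following Kannan and Lovász, one builds lattice projections `πᵢ : ℝ^d → ℝ^(d-i)`, starting from
`π₀ = id`, with the invariant that `ker πᵢ` is covered by the `(sℤ^d ∩ ker πᵢ)`-translates of a
fibre of `P` dilated by a factor `t ≤ Δᵢ`, `t < 1`. Such a covering at a scale `< 1` by the fibre
over a point of `sℤ^(d-i)` in the interior of `πᵢ P` would produce a point of `sℤ^d` in the
interior of `P`; shrinking the fibre towards a `δ`-central point turns the scale `t` into `t / δ`,
so there are no such points for `δ > Δᵢ`. If the volume bound fails at step `i`, Blichfeldt's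
lemma gives a chord of `πᵢ P` of length `L > s / (Δᵢ₊₁ - Δᵢ)` in an integer direction `m`;
projecting along `m` keeps the invariant at a scale `< Δᵢ₊₁`, since moving the base point along
the chord absorbs the residues modulo `s • m`. The process cannot reach `ℝ^0`, where all of `ℝ^d`
would be covered at a scale `< 1`.
-/

namespace KannanLovasz

open Set Module Filter Topology
open scoped Pointwise

section Lattice

variable {s d n : ℕ}

lemma zero_mem_sPts : (0 : Fin d → ℝ) ∈ sPts s d := fun _ => ⟨0, by simp⟩

lemma add_mem_sPts {x y : Fin d → ℝ} (hx : x ∈ sPts s d) (hy : y ∈ sPts s d) :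
    x + y ∈ sPts s d := fun i => by
  obtain ⟨a, ha⟩ := hx i
  obtain ⟨b, hb⟩ := hy i
  exact ⟨a + b, by simp [ha, hb, mul_add]⟩

lemma sub_mem_sPts {x y : Fin d → ℝ} (hx : x ∈ sPts s d) (hy : y ∈ sPts s d) :
    x - y ∈ sPts s d := fun i => by
  obtain ⟨a, ha⟩ := hx i
  obtain ⟨b, hb⟩ := hy i
  exact ⟨a - b, by simp [ha, hb, mul_sub]⟩

lemma smul_mem_sPts_of_mem_intPts {x : Fin d → ℝ} (hx : x ∈ intPts d) (k : ℤ) :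
    ((s : ℝ) * k) • x ∈ sPts s d := fun i => by
  obtain ⟨a, ha⟩ := hx i
  exact ⟨k * a, by simp [ha, mul_assoc]⟩

lemma exists_sPts_preimage {π : (Fin d → ℝ) →ₗ[ℝ] (Fin n → ℝ)}
    (hπ : π '' intPts d = intPts n) {w : Fin n → ℝ} (hw : w ∈ sPts s n) :
    ∃ ω ∈ sPts s d, π ω = w := by
  choose a ha using hw
  obtain ⟨x, hx, hπx⟩ : (fun i => (a i : ℝ)) ∈ π '' intPts d :=
    hπ ▸ fun i => ⟨a i, rfl⟩
  refine ⟨(s : ℝ) • x, by simpa using smul_mem_sPts_of_mem_intPts (s := s) hx 1, ?_⟩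
  ext i
  simp [hπx, ha]

lemma surjective_of_image_intPts_eq {π : (Fin d → ℝ) →ₗ[ℝ] (Fin n → ℝ)}
    (hπ : π '' intPts d = intPts n) : Function.Surjective π := by
  rw [← LinearMap.range_eq_top, eq_top_iff, ← (Pi.basisFun ℝ (Fin n)).span_eq,
    Submodule.span_le]
  rintro _ ⟨i, rfl⟩
  have : Pi.single i 1 ∈ π '' intPts d :=
    hπ ▸ fun j => ⟨(Pi.single i 1 : Fin n → ℤ) j, by simp [Pi.single_apply]⟩
  obtain ⟨x, -, hx⟩ := this
  exact ⟨x, by simpa using hx⟩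

lemma intPts_eq_range (d : ℕ) : intPts d = Set.range fun x : Fin d → ℤ => Int.cast ∘ x := by
  ext y
  refine ⟨fun hy => ?_, ?_⟩
  · choose x hx using hy
    exact ⟨x, funext fun i => (hx i).symm⟩
  · rintro ⟨x, rfl⟩ i
    exact ⟨x i, rfl⟩

lemma exists_linearMap_comp_intCast {k l : ℕ} (f : (Fin k → ℤ) →ₗ[ℤ] (Fin l → ℤ)) :
    ∃ F : (Fin k → ℝ) →ₗ[ℝ] (Fin l → ℝ), ∀ x, F (Int.cast ∘ x) = Int.cast ∘ f x := by
  refine ⟨Matrix.mulVecLin ((LinearMap.toMatrix' f).map (Int.castRingHom ℝ)), fun x => ?_⟩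
  ext i
  simpa using (RingHom.map_mulVec (Int.castRingHom ℝ) (LinearMap.toMatrix' f) x i).symm

lemma image_intPts_eq_of_comp_intCast {k l : ℕ} {F : (Fin k → ℝ) →ₗ[ℝ] (Fin l → ℝ)}
    {f : (Fin k → ℤ) →ₗ[ℤ] (Fin l → ℤ)} (hF : ∀ x, F (Int.cast ∘ x) = Int.cast ∘ f x)
    (hf : Function.Surjective f) : F '' intPts k = intPts l := by
  calc F '' intPts k = Set.range fun x => F (Int.cast ∘ x) := by
        rw [intPts_eq_range, ← Set.range_comp]
        rfl
    _ = Set.range ((fun y : Fin l → ℤ => (Int.cast ∘ y : Fin l → ℝ)) ∘ f) := by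
        simp only [hF]
        rfl
    _ = intPts l := by rw [hf.range_comp, intPts_eq_range]

lemma exists_lattice_proj_apply_eq_zero {k : ℕ} {m : Fin (k + 1) → ℝ}
    (hm : m ∈ intPts (k + 1)) :
    ∃ ρ : (Fin (k + 1) → ℝ) →ₗ[ℝ] (Fin k → ℝ), ρ '' intPts (k + 1) = intPts k ∧ ρ m = 0 := by
  rw [intPts_eq_range] at hm
  obtain ⟨m, rfl⟩ := hm
  obtain ⟨r, snf⟩ := (Submodule.span ℤ {m}).smithNormalForm (Pi.basisFun ℤ (Fin (k + 1)))
  have hr : r ≤ 1 := by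
    simpa [finrank_eq_card_basis snf.bN] using
      finrank_span_le_card (R := ℤ) ({m} : Set (Fin (k + 1) → ℤ))
  obtain ⟨i₀, hi₀⟩ : ∃ i₀, ∀ j, snf.f j = i₀ := by
    rcases r with _ | _ | r
    · exact ⟨0, fun j => j.elim0⟩
    · exact ⟨snf.f 0, fun j => congrArg snf.f (Subsingleton.elim (α := Fin 1) j 0)⟩
    · omega
  -- In a Smith basis of `ℤ^(k+1)` adapted to `ℤ ∙ m`, only the coordinate `i₀` of `m` can be
  -- nonzero; `f` forgets that coordinate.
  let f := LinearMap.funLeft ℤ ℤ i₀.succAbove ∘ₗ snf.bM.equivFun.toLinearMap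
  have hf : Function.Surjective f :=
    (LinearMap.funLeft_surjective_of_injective ℤ ℤ _ Fin.succAbove_right_injective).comp
      snf.bM.equivFun.surjective
  have hfm : f m = 0 := funext fun j =>
    snf.repr_eq_zero_of_notMem_range ⟨m, Submodule.mem_span_singleton_self m⟩
      (by simp [hi₀, (i₀.succAbove_ne j).symm])
  obtain ⟨F, hF⟩ := exists_linearMap_comp_intCast f
  refine ⟨F, image_intPts_eq_of_comp_intCast hF hf, ?_⟩
  change F (Int.cast ∘ m) = 0
  ext j
  simp [hF, hfm]

lemma ker_eq_span_singleton_of_surjective {k : ℕ} {ρ : (Fin (k + 1) → ℝ) →ₗ[ℝ] (Fin k → ℝ)}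
    (hρ : Function.Surjective ρ) {m : Fin (k + 1) → ℝ} (hm : m ≠ 0) (hρm : ρ m = 0) :
    LinearMap.ker ρ = ℝ ∙ m := by
  refine (Submodule.eq_of_le_of_finrank_eq ((Submodule.span_singleton_le_iff_mem _ _).mpr hρm)
    ?_).symm
  have := LinearMap.finrank_range_add_finrank_ker ρ
  rw [LinearMap.range_eq_top.mpr hρ, finrank_top] at this
  simp only [finrank_fin_fun] at this
  rw [finrank_span_singleton hm]
  omega

def IsSLatticeProj (s : ℕ) (π : (Fin d → ℝ) →ₗ[ℝ] (Fin n → ℝ)) : Prop :=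
  π '' intPts d = intPts n ∧
    Submodule.span ℝ ((LinearMap.ker π : Set (Fin d → ℝ)) ∩ sPts s d) = LinearMap.ker π

lemma isSLatticeProj_id : IsSLatticeProj s (LinearMap.id : (Fin d → ℝ) →ₗ[ℝ] (Fin d → ℝ)) := by
  refine ⟨Set.image_id _, ?_⟩
  rw [LinearMap.ker_id, eq_bot_iff, Submodule.span_le]
  exact Set.inter_subset_left

lemma span_ker_comp_inter_sPts {k : ℕ} {π : (Fin d → ℝ) →ₗ[ℝ] (Fin n → ℝ)}
    {ρ : (Fin n → ℝ) →ₗ[ℝ] (Fin k → ℝ)} {m : Fin n → ℝ} {mt : Fin d → ℝ} (hs : s ≠ 0)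
    (hπ : Submodule.span ℝ ((LinearMap.ker π : Set (Fin d → ℝ)) ∩ sPts s d) = LinearMap.ker π)
    (hρ : LinearMap.ker ρ = ℝ ∙ m) (hmt : mt ∈ intPts d) (hπmt : π mt = m) :
    Submodule.span ℝ ((LinearMap.ker (ρ ∘ₗ π) : Set (Fin d → ℝ)) ∩ sPts s d) =
      LinearMap.ker (ρ ∘ₗ π) := by
  refine le_antisymm (Submodule.span_le.mpr Set.inter_subset_left) fun u hu => ?_
  have hπu : π u ∈ LinearMap.ker ρ := hu
  obtain ⟨c, hc⟩ := Submodule.mem_span_singleton.mp (hρ ▸ hπu)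
  have hsmt : (s : ℝ) • mt ∈ (LinearMap.ker (ρ ∘ₗ π) : Set (Fin d → ℝ)) ∩ sPts s d := by
    refine ⟨?_, by simpa using smul_mem_sPts_of_mem_intPts (s := s) hmt 1⟩
    have hm : ρ m = 0 := LinearMap.mem_ker.mp (hρ ▸ Submodule.mem_span_singleton_self m)
    simp [hπmt, hm]
  have hdecomp : u = (u - c • mt) + (c / s) • ((s : ℝ) • mt) := by
    rw [smul_smul]
    field_simp
    module
  rw [hdecomp]
  refine Submodule.add_mem _ ?_ (Submodule.smul_mem _ _ (Submodule.subset_span hsmt))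
  have : u - c • mt ∈ LinearMap.ker π := by simp [hπmt, hc]
  rw [← hπ] at this
  exact Submodule.span_mono (Set.inter_subset_inter_left _ (LinearMap.ker_le_ker_comp π ρ)) this

end Lattice

lemma interior_image_subset_image_interior {E F : Type*} [NormedAddCommGroup E]
    [NormedSpace ℝ E] [FiniteDimensional ℝ E] [NormedAddCommGroup F] [NormedSpace ℝ F]
    [FiniteDimensional ℝ F] {π : E →ₗ[ℝ] F} (hπ : Function.Surjective π) {P : Set E}
    (hP : Convex ℝ P) (hint : (interior P).Nonempty) :
    interior (π '' P) ⊆ π '' interior P := by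
  have hopen : IsOpen (π '' interior P) :=
    π.isOpenMap_of_finiteDimensional hπ _ isOpen_interior
  have hsub : π '' P ⊆ closure (π '' interior P) := by
    calc π '' P ⊆ π '' closure (interior P) := by
          rw [hP.closure_interior_eq_closure_of_nonempty_interior hint]
          exact image_mono subset_closure
      _ ⊆ closure (π '' interior P) :=
          image_closure_subset_closure_image π.continuous_of_finiteDimensional
  calc interior (π '' P) ⊆ interior (closure (π '' interior P)) := interior_mono hsub
    _ = π '' interior P := by
      rw [(hP.interior.linear_image π).interior_closure_eq_interior_of_nonempty_interior
        (hopen.interior_eq.symm ▸ hint.image π), hopen.interior_eq]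

def IsCentral {E : Type*} [AddCommGroup E] [Module ℝ E] (δ : ℝ) (K : Set E) (w : E) : Prop :=
  ∀ y ∈ K, ∃ z ∈ K, z - w = δ • (z - y)

lemma not_isCentral_of_one_le {E : Type*} [NormedAddCommGroup E] [NormedSpace ℝ E]
    [Nontrivial E] {K : Set E} (hK : IsCompact K) {w : E} (hw : w ∈ interior K) {δ : ℝ}
    (hδ : 1 ≤ δ) : ¬ IsCentral δ K w := by
  intro hcent
  -- For `y` farthest from `w`, `hyz` would put its partner `z` farther still, unless `y = w`.
  obtain ⟨y, hy, hmax⟩ := hK.exists_isMaxOn ⟨w, interior_subset hw⟩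
    (continuous_id.sub (continuous_const (y := w))).norm.continuousOn
  obtain ⟨z, hz, hzw⟩ := hcent y hy
  have hyz : δ • (y - w) = (δ - 1) • (z - w) := by
    linear_combination (norm := module) hzw
  have hy0 : ‖y - w‖ ≤ 0 := by
    have hzy : ‖z - w‖ ≤ ‖y - w‖ := hmax hz
    have := congrArg norm hyz
    rw [norm_smul, norm_smul, Real.norm_of_nonneg (by linarith),
      Real.norm_of_nonneg (by linarith)] at this
    nlinarith [mul_le_mul_of_nonneg_left hzy (sub_nonneg.mpr hδ)]
  have hKw : K ⊆ {w} := fun x hx => by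
    have : ‖x - w‖ ≤ 0 := (hmax hx).trans hy0
    simpa [sub_eq_zero] using norm_le_zero_iff.mp this
  simpa using interior_mono hKw hw

lemma exists_add_smul_mem_of_volume_lt {N : ℕ} {Q : Set (Fin N → ℝ)}
    (hQ : MeasurableSet Q) {c : ℝ} (hc : 0 < c) (hvol : ENNReal.ofReal (c ^ N) < volume Q) :
    ∃ m ∈ intPts N, m ≠ 0 ∧ ∃ q ∈ Q, q + c • m ∈ Q := by
  let b := Pi.basisFun ℝ (Fin N)
  have hF : volume (ZSpan.fundamentalDomain b) = 1 := by
    rw [ZSpan.fundamentalDomain_pi_basisFun, Real.volume_pi_Ico]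
    simp
  have hT : volume (ZSpan.fundamentalDomain b) < volume (c⁻¹ • Q) := by
    rw [hF, Measure.addHaar_smul, finrank_fin_fun, inv_pow,
      abs_of_pos (inv_pos.mpr (pow_pos hc N)), ENNReal.ofReal_inv_of_pos (pow_pos hc N)]
    rw [← ENNReal.div_eq_inv_mul, ENNReal.lt_div_iff_mul_lt (by simp [hc]) (by simp), one_mul]
    exact hvol
  have : Countable (Submodule.span ℤ (Set.range b)).toAddSubgroup :=
    inferInstanceAs (Countable (Submodule.span ℤ (Set.range b)))
  obtain ⟨x, y, hxy, hxyT⟩ := exists_pair_mem_lattice_not_disjoint_vadd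
    (ZSpan.isAddFundamentalDomain' b volume) (hQ.const_smul₀ c⁻¹).nullMeasurableSet hT
  obtain ⟨_, ⟨_, ⟨q₁, hq₁, rfl⟩, rfl⟩, ⟨_, ⟨q₂, hq₂, rfl⟩, hq⟩⟩ := Set.not_disjoint_iff.mp hxyT
  have hm : ((x - y : _) : Fin N → ℝ) ∈ intPts N := fun i => by
    obtain ⟨a, ha⟩ := (b.mem_span_iff_repr_mem ℤ _).mp (x - y).2 i
    exact ⟨a, by simpa [b] using ha.symm⟩
  refine ⟨_, hm, by simpa [sub_eq_zero] using hxy, q₁, hq₁, ?_⟩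
  convert hq₂ using 1
  simp only [AddSubgroup.vadd_def, vadd_eq_add] at hq
  have hxy' : (x : Fin N → ℝ) - y = c⁻¹ • (q₂ - q₁) := by
    linear_combination (norm := module) -hq
  rw [AddSubgroup.coe_sub, hxy', smul_smul, mul_inv_cancel₀ hc.ne', one_smul, add_sub_cancel]

lemma exists_long_lattice_chord {N : ℕ} {Q : Set (Fin N → ℝ)} (hQ : MeasurableSet Q) {c : ℝ}
    (hc : 0 < c) (hvol : ENNReal.ofReal (c ^ N) < volume Q) :
    ∃ L > c, ∃ m ∈ intPts N, m ≠ 0 ∧ ∃ q ∈ Q, q + L • m ∈ Q := by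
  have hnear : ∀ᶠ L in 𝓝[>] c, ENNReal.ofReal (L ^ N) < volume Q :=
    nhdsWithin_le_nhds <| (ENNReal.continuous_ofReal.comp (continuous_pow N)).continuousAt
      |>.eventually_lt continuousAt_const hvol
  obtain ⟨L, hLvol, hcL⟩ := (hnear.and self_mem_nhdsWithin).exists
  exact ⟨L, hcL, exists_add_smul_mem_of_volume_lt hQ (hc.trans hcL) hLvol⟩

/-- The invariant of the Kannan–Lovász induction: the translates of the dilated fibre
`t • (P ∩ π⁻¹(π p₀) - p₀)` by the lattice `sℤ^d ∩ ker π` cover `ker π`. -/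
def CoversKernel (s : ℕ) {d n : ℕ} (P : Set (Fin d → ℝ)) (π : (Fin d → ℝ) →ₗ[ℝ] (Fin n → ℝ))
    (p₀ : Fin d → ℝ) (t : ℝ) : Prop :=
  p₀ ∈ P ∧ ∀ u ∈ LinearMap.ker π,
    ∃ p ∈ P, π p = π p₀ ∧ ∃ l ∈ sPts s d, π l = 0 ∧ u = t • (p - p₀) + l

section Covering

variable {s d n : ℕ} {P : Set (Fin d → ℝ)} {π : (Fin d → ℝ) →ₗ[ℝ] (Fin n → ℝ)}
  {p₀ : Fin d → ℝ} {t : ℝ}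

lemma coversKernel_id {p : Fin d → ℝ} (hp : p ∈ P) : CoversKernel s P LinearMap.id p 0 :=
  ⟨hp, fun u hu => ⟨p, hp, rfl, 0, zero_mem_sPts, map_zero _, by simpa using hu⟩⟩

namespace CoversKernel

lemma mono (hP : Convex ℝ P) (h : CoversKernel s P π p₀ t) (ht : 0 ≤ t) {t' : ℝ}
    (htt' : t ≤ t') : CoversKernel s P π p₀ t' := by
  obtain rfl | htt' := htt'.eq_or_lt
  · exact h
  have ht' : 0 < t' := ht.trans_lt htt'
  refine ⟨h.1, fun u hu => ?_⟩
  obtain ⟨p, hp, hπp, l, hl, hπl, rfl⟩ := h.2 u hu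
  refine ⟨(t / t') • p + (1 - t / t') • p₀, hP hp h.1 (by positivity)
    (by rw [sub_nonneg, div_le_one ht']; exact htt'.le) (by ring), ?_, l, hl, hπl, ?_⟩
  · simp only [map_add, map_smul, hπp]
    module
  · match_scalars <;> field_simp
    ring

lemma homothety (hP : Convex ℝ P) (h : CoversKernel s P π p₀ t) {r : Fin d → ℝ} (hr : r ∈ P)
    {a : ℝ} (ha : 0 < a) (ha1 : a ≤ 1) :
    CoversKernel s P π (a • p₀ + (1 - a) • r) (t / a) := by
  refine ⟨hP h.1 hr ha.le (by linarith) (by ring), fun u hu => ?_⟩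
  obtain ⟨p, hp, hπp, l, hl, hπl, rfl⟩ := h.2 u hu
  refine ⟨a • p + (1 - a) • r, hP hp hr ha.le (by linarith) (by ring), ?_, l, hl, hπl, ?_⟩
  · simp only [map_add, map_smul, hπp]
  · match_scalars <;> field_simp
    ring

lemma not_sHollow (hP : Convex ℝ P) (h : CoversKernel s P π p₀ t)
    (ht0 : 0 ≤ t) (ht1 : t < 1) {ω : Fin d → ℝ} (hω : ω ∈ sPts s d) (hπω : π ω = π p₀)
    {x₀ : Fin d → ℝ} (hx₀ : x₀ ∈ interior P) (hπx₀ : π x₀ = π p₀) :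
    ¬ SHollow s P := by
  have hu : ω - (1 - t) • x₀ - t • p₀ ∈ LinearMap.ker π := by
    simp only [LinearMap.mem_ker, map_sub, map_smul, hπω, hπx₀]
    module
  obtain ⟨p, hp, -, l, hl, -, hrep⟩ := h.2 _ hu
  have hωl : ω - l = (1 - t) • x₀ + t • p := by
    linear_combination (norm := module) hrep
  intro hhollow
  refine hhollow.subset (⟨?_, sub_mem_sPts hω hl⟩ : ω - l ∈ interior P ∩ sPts s d)
  rw [hωl]
  exact hP.combo_interior_self_mem_interior hx₀ hp (by linarith) ht0 (by ring)

lemma not_isCentral [NeZero n] (hP : Convex ℝ P) (hPc : IsCompact P) (hhollow : SHollow s P)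
    (hint : (interior P).Nonempty) (hπ : π '' intPts d = intPts n)
    (h : CoversKernel s P π p₀ t) (ht : 0 ≤ t) {w : Fin n → ℝ} (hw : w ∈ interior (π '' P))
    (hws : w ∈ sPts s n) {δ : ℝ} (hδ : t < δ) : ¬ IsCentral δ (π '' P) w := by
  obtain hδ1 | hδ1 := le_or_gt 1 δ
  · exact not_isCentral_of_one_le (hPc.image π.continuous_of_finiteDimensional) hw hδ1
  intro hcent
  obtain ⟨_, ⟨r, hr, rfl⟩, hzw⟩ := hcent (π p₀) ⟨p₀, h.1, rfl⟩
  have hδ0 : 0 < δ := ht.trans_lt hδ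
  have hπw : π (δ • p₀ + (1 - δ) • r) = w := by
    simp only [map_add, map_smul]
    linear_combination (norm := module) hzw
  obtain ⟨ω, hω, rfl⟩ := exists_sPts_preimage hπ hws
  obtain ⟨x₀, hx₀, hπx₀⟩ :=
    interior_image_subset_image_interior (surjective_of_image_intPts_eq hπ) hP hint hw
  exact (h.homothety hP hr hδ0 hδ1.le).not_sHollow hP (by positivity)
    ((div_lt_one hδ0).mpr hδ) hω hπw.symm hx₀ (hπx₀.trans hπw.symm) hhollow

lemma exists_shift {m : Fin n → ℝ} (hP : Convex ℝ P) (h : CoversKernel s P π p₀ t) {r₀ : Fin d → ℝ}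
    (hr₀ : r₀ ∈ P) {L : ℝ} (hL : 0 < L) (hr₀L : π r₀ + L • m ∈ π '' P) {a : ℝ} (ha0 : 0 < a)
    (ha1 : a < 1) {τ : ℝ} (hτ0 : 0 ≤ τ) (hτ : τ ≤ a * L) :
    ∃ p, CoversKernel s P π p (t / (1 - a)) ∧ π p = π ((1 - a) • p₀ + a • r₀) + τ • m := by
  have hseg : π r₀ + (τ / (a * L)) • (L • m) ∈ π '' P :=
    (hP.linear_image π).add_smul_mem ⟨r₀, hr₀, rfl⟩ hr₀L
      ⟨by positivity, (div_le_one (by positivity)).mpr hτ⟩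
  obtain ⟨r, hr, hπr⟩ := hseg
  have hcov := h.homothety hP hr (a := 1 - a) (by linarith) (by linarith)
  rw [sub_sub_cancel] at hcov
  refine ⟨_, hcov, ?_⟩
  simp only [map_add, map_smul, hπr]
  match_scalars <;> field_simp

/-- An element of `ker (ρ ∘ₗ π)` lies over some `c • m`: the part `s ⌊c / s⌋ • mt` goes into the
lattice, and the rest, of length `< s`, is absorbed by moving the base point along the chord
`[q, q + L • m]` of `π '' P`. -/
lemma comp {k : ℕ} {ρ : (Fin n → ℝ) →ₗ[ℝ] (Fin k → ℝ)} {m : Fin n → ℝ} {mt : Fin d → ℝ}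
    (hP : Convex ℝ P) (hs : s ≠ 0) (h : CoversKernel s P π p₀ t) (ht : 0 ≤ t)
    (hρ : LinearMap.ker ρ = ℝ ∙ m) (hmt : mt ∈ intPts d) (hπmt : π mt = m) {q : Fin n → ℝ}
    (hq : q ∈ π '' P) {L : ℝ} (hL : 0 < L) (hqL : q + L • m ∈ π '' P) {a : ℝ} (ha0 : 0 < a)
    (ha1 : a < 1) :
    ∃ p₁, CoversKernel s P (ρ ∘ₗ π) p₁ (max (t / (1 - a)) (s / (a * L))) := by
  obtain ⟨r₀, hr₀, rfl⟩ := hq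
  set t' := max (t / (1 - a)) (s / (a * L))
  have hs0 : (0 : ℝ) < s := by positivity
  have ht' : s / (a * L) ≤ t' := le_max_right _ _
  have ht'0 : 0 < t' := (by positivity : (0 : ℝ) < s / (a * L)).trans_le ht'
  have hρm : ρ m = 0 := LinearMap.mem_ker.mp (hρ ▸ Submodule.mem_span_singleton_self m)
  refine ⟨(1 - a) • p₀ + a • r₀, hP h.1 hr₀ (by linarith) ha0.le (by ring), fun u hu => ?_⟩
  have hπu : π u ∈ LinearMap.ker ρ := hu
  obtain ⟨c, hc⟩ := Submodule.mem_span_singleton.mp (hρ ▸ hπu)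
  set τ := s * Int.fract (c / s) / t'
  have hτ0 : 0 ≤ τ := by positivity
  have hτ : τ ≤ a * L := by
    rw [div_le_iff₀ ht'0, ← div_le_iff₀' (by positivity)]
    calc s * Int.fract (c / s) / (a * L) ≤ s / (a * L) := by
          gcongr
          exact mul_le_of_le_one_right hs0.le (Int.fract_lt_one _).le
      _ ≤ t' := ht'
  obtain ⟨pτ, hcov, hπpτ⟩ := h.exists_shift hP hr₀ hL hqL ha0 ha1 hτ0 hτ
  have hcov' := hcov.mono hP (div_nonneg ht (by linarith)) (le_max_left _ (s / (a * L) : ℝ))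
  have hcsk : c = s * ⌊c / s⌋ + t' * τ := by
    simp only [τ, Int.fract]
    field_simp
    ring
  have hker : u - ((s : ℝ) * ⌊c / s⌋) • mt - t' • (pτ - ((1 - a) • p₀ + a • r₀)) ∈
      LinearMap.ker π := by
    rw [LinearMap.mem_ker, map_sub, map_sub, map_smul, map_smul, map_sub, hπpτ, hπmt, ← hc]
    linear_combination (norm := module) hcsk • m
  obtain ⟨p, hp, hπp, l, hl, hπl, hrep⟩ := hcov'.2 _ hker
  refine ⟨p, hp, ?_, l + ((s : ℝ) * ⌊c / s⌋) • mt,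
    add_mem_sPts hl (smul_mem_sPts_of_mem_intPts hmt _), ?_, ?_⟩
  · simp [hπp, hπpτ, hρm]
  · simp [hπl, hπmt, hρm]
  · linear_combination (norm := module) hrep

end CoversKernel

end Covering

lemma exists_pos_lt_one_max_div_lt {s t L b : ℝ} (hs : 0 < s) (ht : 0 ≤ t) (hL : 0 < L)
    (hb : s / L < b - t) : ∃ a, 0 < a ∧ a < 1 ∧ max (t / (1 - a)) (s / (a * L)) < b := by
  have hb0 : 0 < b := by linarith [div_pos hs hL]
  obtain ⟨a, hsa, hat⟩ : ∃ a, s / (L * b) < a ∧ a < 1 - t / b := exists_between <| by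
    rw [div_mul_eq_div_div, div_lt_iff₀ hb0, sub_mul, div_mul_cancel₀ _ hb0.ne', one_mul]
    linarith
  have ha0 : 0 < a := lt_trans (by positivity) hsa
  have ha1 : a < 1 := hat.trans_le (by linarith [div_nonneg ht hb0.le])
  refine ⟨a, ha0, ha1, max_lt ?_ ?_⟩
  · have := (div_lt_iff₀ hb0).mp (by linarith : t / b < 1 - a)
    rw [div_lt_iff₀ (by linarith)]
    linarith
  · rw [div_lt_iff₀ (by positivity)]
    rw [div_lt_iff₀ (by positivity)] at hsa
    linarith

section Induction

variable {s d : ℕ} {P : Set (Fin d → ℝ)}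

lemma exists_coversKernel_of_volume_lt {n : ℕ} (hs : s ≠ 0) (hP : Convex ℝ P)
    (hPc : IsCompact P) {π : (Fin d → ℝ) →ₗ[ℝ] (Fin (n + 1) → ℝ)} (hπ : IsSLatticeProj s π)
    {p₀ : Fin d → ℝ} {t : ℝ} (h : CoversKernel s P π p₀ t) (ht : 0 ≤ t) {a b : ℝ}
    (hta : t ≤ a) (hab : a < b)
    (hvol : ENNReal.ofReal ((s : ℝ) ^ (n + 1) / (b - a) ^ (n + 1)) < volume (π '' P)) :
    ∃ π' : (Fin d → ℝ) →ₗ[ℝ] (Fin n → ℝ), IsSLatticeProj s π' ∧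
      ∃ p₁ t', CoversKernel s P π' p₁ t' ∧ 0 ≤ t' ∧ t' < b := by
  have hs0 : (0 : ℝ) < s := by positivity
  rw [← div_pow] at hvol
  obtain ⟨L, hL, m, hm, hm0, q, hq, hqL⟩ := exists_long_lattice_chord
    (hPc.image π.continuous_of_finiteDimensional).measurableSet
    (div_pos hs0 (sub_pos.mpr hab)) hvol
  have hL0 : 0 < L := lt_trans (div_pos hs0 (sub_pos.mpr hab)) hL
  obtain ⟨ρ, hρlat, hρm⟩ := exists_lattice_proj_apply_eq_zero hm
  have hρ := ker_eq_span_singleton_of_surjective (surjective_of_image_intPts_eq hρlat) hm0 hρm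
  obtain ⟨mt, hmt, hπmt⟩ : m ∈ π '' intPts d := hπ.1 ▸ hm
  obtain ⟨a', ha0, ha1, hab'⟩ := exists_pos_lt_one_max_div_lt (b := b) hs0 ht hL0 <| by
    rw [gt_iff_lt, div_lt_iff₀ (sub_pos.mpr hab)] at hL
    rw [div_lt_iff₀ hL0]
    nlinarith
  obtain ⟨p₁, hcov⟩ := h.comp hP hs ht hρ hmt hπmt hq hL0 hqL ha0 ha1
  refine ⟨ρ ∘ₗ π, ⟨?_, span_ker_comp_inter_sPts hs hπ.2 hρ hmt hπmt⟩, p₁, _, hcov,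
    le_max_of_le_right (by positivity), hab'⟩
  rw [LinearMap.coe_comp, Set.image_comp, hπ.1, hρlat]

lemma exists_proj_of_coversKernel (hs : s ≠ 0) (hP : Convex ℝ P) (hPc : IsCompact P)
    (hhollow : SHollow s P) (hint : (interior P).Nonempty) {Δ : ℕ → ℝ}
    (hΔ : StrictMonoOn Δ (Set.Iic d)) (hΔd : Δ d ≤ 1) :
    ∀ n i, i + n = d → ∀ π : (Fin d → ℝ) →ₗ[ℝ] (Fin n → ℝ), IsSLatticeProj s π →
      ∀ p₀ t, CoversKernel s P π p₀ t → 0 ≤ t → t ≤ Δ i → t < 1 →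
      ∃ i k, i < d ∧ i + k = d ∧ ∃ π : (Fin d → ℝ) →ₗ[ℝ] (Fin k → ℝ), IsSLatticeProj s π ∧
        (∀ w ∈ interior (π '' P) ∩ sPts s k, ∀ δ, Δ i < δ → ¬ IsCentral δ (π '' P) w) ∧
        volume (π '' P) ≤ ENNReal.ofReal ((s : ℝ) ^ k / (Δ (i + 1) - Δ i) ^ k) := by
  intro n
  induction n with
  | zero =>
    intro i _ π _ p₀ t h ht0 _ ht1
    obtain ⟨x, hx⟩ := hint
    exact absurd hhollow
      (h.not_sHollow hP ht0 ht1 zero_mem_sPts (Subsingleton.elim _ _) hx (Subsingleton.elim _ _))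
  | succ n ih =>
    intro i hi π hπ p₀ t h ht0 hti ht1
    have hid : i < d := by omega
    have hΔi : Δ i < Δ (i + 1) := hΔ (by simp; omega) (by simp; omega) (by omega)
    by_cases hvol : volume (π '' P) ≤
        ENNReal.ofReal ((s : ℝ) ^ (n + 1) / (Δ (i + 1) - Δ i) ^ (n + 1))
    · exact ⟨i, n + 1, hid, hi, π, hπ, fun w hw δ hδ =>
        h.not_isCentral hP hPc hhollow hint hπ.1 ht0 hw.1 hw.2 (hti.trans_lt hδ), hvol⟩
    obtain ⟨π', hπ', p₁, t', h', ht'0, ht'⟩ :=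
      exists_coversKernel_of_volume_lt hs hP hPc hπ h ht0 hti hΔi (not_le.mp hvol)
    have hΔ1 : Δ (i + 1) ≤ 1 :=
      (hΔ.monotoneOn (by simp; omega) (by simp) (by omega)).trans hΔd
    exact ih (i + 1) (by omega) π' hπ' p₁ t' h' ht'0 ht'.le (ht'.trans_le hΔ1)

end Induction

end KannanLovasz

open KannanLovasz

/-- Kannan–Lovász, lattice polytope version. -/
theorem kannan_lovasz (d s : ℕ) (hs : 1 ≤ s) (P : Set (Fin d → ℝ))
    (hP : IsLatticePolytope P) (hfull : IsFullDim P) (hhollow : SHollow s P)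
    (Δ : ℕ → ℝ) (hΔ0 : Δ 0 = 0) (hmono : ∀ j < d, Δ j < Δ (j + 1)) (hΔd : Δ d ≤ 1) :
    ∃ i < d, ∃ π : (Fin d → ℝ) →ᵃ[ℝ] (Fin (d - i) → ℝ),
      Function.Surjective π ∧ π '' intPts d = intPts (d - i) ∧
      Submodule.span ℝ ((LinearMap.ker π.linear : Set (Fin d → ℝ)) ∩ sPts s d)
        = LinearMap.ker π.linear ∧
      (∀ w ∈ interior (π '' P) ∩ sPts s (d - i), ∀ δ : ℝ, Δ i < δ →
        ¬ (∀ y ∈ π '' P, ∃ z ∈ π '' P, z - w = δ • (z - y))) ∧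
      volume (π '' P) ≤ ENNReal.ofReal ((s : ℝ) ^ (d - i) / (Δ (i + 1) - Δ i) ^ (d - i)) := by
  obtain ⟨V, hVfin, -, -, rfl⟩ := hP
  have hconv : Convex ℝ (convexHull ℝ V) := convex_convexHull ℝ V
  obtain ⟨p₀, hp₀⟩ := hconv.interior_nonempty_iff_affineSpan_eq_top.mpr hfull
  obtain ⟨i, k, hi, hik, π, ⟨hlat, hker⟩, hcent, hvol⟩ :=
    exists_proj_of_coversKernel (by omega) hconv (hVfin.isCompact_convexHull (𝕜 := ℝ)) hhollow
      ⟨p₀, hp₀⟩ (strictMonoOn_Iic_of_lt_succ hmono) hΔd d 0 (zero_add d) LinearMap.id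
      isSLatticeProj_id p₀ 0 (coversKernel_id (interior_subset hp₀)) le_rfl hΔ0.ge zero_lt_one
  obtain rfl : k = d - i := by omega
  exact ⟨i, hi, π.toAffineMap, surjective_of_image_intPts_eq hlat, hlat, hker, hcent, hvol⟩
end

section
/- Let P ⊂ ℝ^n be a compact convex set with nonempty interior, let w be an interior point of P, and let c > 0. If for every unit vector y ∈ ℝ^n one has sup{λ ≥ 0 : w + λ·y ∈ P} ≤ c · sup{λ ≥ 0 : w − λ·y ∈ P} (i.e. the coefficient of asymmetry of w in P is at most c), then w is (1/(c+1))-central in P: for every y ∈ P there exists z ∈ P with z − w = (1/(c+1))·(z − y). -/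
open MeasureTheory
open scoped ENNReal

/-!
Write `y = w + ‖y - w‖ • u` with `u` a unit vector. Then `‖y - w‖` is at most the length of the
chord of `P` from `w` in direction `u`, so by the asymmetry bound the chord from `w` in direction
`-u` has length at least `‖y - w‖ / c`. That chord is a compact segment starting at `w`, hence
`z = w - (‖y - w‖ / c) • u` lies in `P`, and `z - w = -(y - w) / c = (z - y) / (c + 1)`.
-/

open Set Topology

section RayParams

variable {E : Type*} [AddCommGroup E] [Module ℝ E] {P : Set E} {w y : E}

def rayParams (P : Set E) (w y : E) : Set ℝ := {l | 0 ≤ l ∧ w + l • y ∈ P}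

theorem rayParams_eq_Ici_inter_preimage (P : Set E) (w y : E) :
    rayParams P w y = Ici 0 ∩ (fun l : ℝ => w + l • y) ⁻¹' P :=
  rfl

theorem Convex.rayParams (hP : Convex ℝ P) (w y : E) : Convex ℝ (rayParams P w y) := by
  rw [rayParams_eq_Ici_inter_preimage]
  exact (convex_Ici 0).inter
    ((hP.translate_preimage_right w).is_linear_preimage (IsLinearMap.isLinearMap_smul' y))

variable [TopologicalSpace E] [IsTopologicalAddGroup E] [ContinuousSMul ℝ E] [T2Space E]

theorem IsCompact.rayParams (hP : IsCompact P) (w : E) (hy : y ≠ 0) :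
    IsCompact (rayParams P w y) := by
  have hemb : IsClosedEmbedding fun l : ℝ => w + l • y :=
    (Homeomorph.addLeft w).isClosedEmbedding.comp (isClosedEmbedding_smul_left hy)
  rw [rayParams_eq_Ici_inter_preimage]
  exact (hemb.isCompact_preimage hP).inter_left isClosed_Ici

theorem add_smul_mem_of_le_sSup_rayParams (hcomp : IsCompact P) (hconv : Convex ℝ P)
    (hw : w ∈ P) (hy : y ≠ 0) {t : ℝ} (ht₀ : 0 ≤ t) (ht : t ≤ sSup (rayParams P w y)) :
    w + t • y ∈ P := by
  have hzero : (0 : ℝ) ∈ rayParams P w y := ⟨le_rfl, by simpa using hw⟩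
  have hsup := (hcomp.rayParams w hy).sSup_mem ⟨0, hzero⟩
  exact ((hconv.rayParams w y).ordConnected.out hzero hsup ⟨ht₀, ht⟩).2

end RayParams

/-- An interior point with coefficient of asymmetry at most `c` is
`1/(c+1)`-central. -/
theorem central_of_asymmetry (n : ℕ) (P : Set (Fin n → ℝ))
    (hcomp : IsCompact P) (hconv : Convex ℝ P)
    (w : Fin n → ℝ) (hw : w ∈ interior P) (c : ℝ) (hc : 0 < c)
    (hca : ∀ y : Fin n → ℝ, ‖y‖ = 1 →
      sSup {l : ℝ | 0 ≤ l ∧ w + l • y ∈ P} ≤ c * sSup {l : ℝ | 0 ≤ l ∧ w - l • y ∈ P}) :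
    ∀ y ∈ P, ∃ z ∈ P, z - w = (1 / (c + 1)) • (z - y) := by
  intro y hy
  obtain rfl | hyw := eq_or_ne y w
  · exact ⟨y, hy, by simp⟩
  have hwP : w ∈ P := interior_subset hw
  set r := ‖y - w‖
  set u := r⁻¹ • (y - w)
  have hu : ‖u‖ = 1 := norm_smul_inv_norm (sub_ne_zero.2 hyw)
  have hu₀ : u ≠ 0 := norm_ne_zero_iff.1 (by rw [hu]; exact one_ne_zero)
  have hyu : y = w + r • u := by
    rw [smul_smul, mul_inv_cancel₀ (norm_ne_zero_iff.2 (sub_ne_zero.2 hyw)), one_smul,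
      add_sub_cancel]
  have hforward : r ≤ sSup (rayParams P w u) :=
    le_csSup (hcomp.rayParams w hu₀).bddAbove ⟨norm_nonneg _, hyu ▸ hy⟩
  have hbackward : r / c ≤ sSup (rayParams P w (-u)) := by
    have h := hca u hu
    simp_rw [sub_eq_add_neg w, ← smul_neg] at h
    rw [div_le_iff₀' hc]
    exact hforward.trans h
  refine ⟨w + (r / c) • -u,
    add_smul_mem_of_le_sSup_rayParams hcomp hconv hwP (neg_ne_zero.2 hu₀) (by positivity)
      hbackward, ?_⟩
  rw [hyu]
  match_scalars <;> field_simp <;> ring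
end

section
/- Let d ≥ 4 and α := 1/(2^{d−2} − 1). Then no integer point x ∈ ℤ^d satisfies simultaneously: x_i ≥ 0 for 1 ≤ i ≤ d; x_1/2 + x_2/4 + ⋯ + x_{d−2}/2^{d−2} + x_{d−1}/(2^{d−1} − 1) + x_d/(2^{d−1} + 1 + α) ≤ 1; and x_1/2 + x_2/4 + ⋯ + x_{d−3}/2^{d−3} + (2x_{d−2} + x_{d−1} + x_d)/(2^{d−1} + 1) > 1. Equivalently, every integer point of the simplex Δ(d) := {x ∈ ℝ^d : x_i ≥ 0, x_1/2 + ⋯ + x_{d−2}/2^{d−2} + x_{d−1}/(2^{d−1}−1) + x_d/(2^{d−1}+1+α) ≤ 1} also satisfies x_1/2 + ⋯ + x_{d−3}/2^{d−3} + (2x_{d−2} + x_{d−1} + x_d)/(2^{d−1} + 1) ≤ 1. -/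
open MeasureTheory
open scoped ENNReal

/-!
Write `d = m + 3` and `M = 2^m`. For a nonnegative integer point the first `m` coordinates contribute
the same dyadic number `k / M` (with `k ∈ ℕ`) to both inequalities, and `α = 1/(2M - 1)` makes the
last coefficient of `Δ(d)` equal to `(2M - 1)/(2M(4M - 1))`. Clearing denominators, the first
inequality for the last three coordinates `y, z, w` gives `(2M - 1)s ≤ 2(4M - 1)(M - k)` with
`s = 2y + z + w`, and the integrality of `s` upgrades this to `Ms ≤ (4M + 1)(M - k)`, which is the
second inequality with denominators cleared.
-/

/- Dividing by `2M - 1`, `s ≤ 4(M - k) + 2(M - k)/(2M - 1)`; the fractional excess is `< 1` when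
`k ≥ 1` and `< 2` when `k = 0`, so integrality gives `s ≤ 4(M - k)`, resp. `s ≤ 4M + 1`. -/
lemma mul_le_of_two_mul_sub_one_mul_le {M k s : ℤ} (hM : 2 ≤ M) (hk : 0 ≤ k) (hs : 0 ≤ s)
    (h : (2 * M - 1) * s ≤ 2 * (4 * M - 1) * (M - k)) : M * s ≤ (4 * M + 1) * (M - k) := by
  have hkM : k ≤ M := by nlinarith
  rcases hk.eq_or_lt with rfl | hk
  · have : s ≤ 4 * M + 1 := by
      by_contra! hs'
      nlinarith
    nlinarith
  · have : s ≤ 4 * (M - k) := by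
      by_contra! hs'
      nlinarith
    nlinarith

lemma second_ineq_of_first {M k y z w : ℤ} (hM : 2 ≤ M) (hk : 0 ≤ k) (hy : 0 ≤ y) (hz : 0 ≤ z)
    (hw : 0 ≤ w)
    (h : (k : ℝ) / M + y / (2 * M) + z / (4 * M - 1) + w / (4 * M + 1 + 1 / (2 * M - 1)) ≤ 1) :
    (k : ℝ) / M + 2 * y / (4 * M + 1) + z / (4 * M + 1) + w / (4 * M + 1) ≤ 1 := by
  have hMR : (2 : ℝ) ≤ M := by exact_mod_cast hM
  have hM0 : (M : ℝ) ≠ 0 := by positivity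
  have h2M : (2 * M - 1 : ℝ) ≠ 0 := by linarith
  have hwcoef : (4 * M + 1 + 1 / (2 * M - 1) : ℝ) = 2 * M * (4 * M - 1) / (2 * M - 1) := by
    rw [eq_div_iff h2M, add_mul, one_div_mul_cancel h2M]
    ring
  have hcleared : 2 * (4 * M - 1) * k + (4 * M - 1) * y + 2 * M * z + (2 * M - 1) * w
      ≤ 2 * M * (4 * M - 1) := by
    have hD : (0 : ℝ) < 2 * M * (4 * M - 1) := by nlinarith
    -- `field_simp` looks for the denominators in its normal form
    have : (M * 2 - 1 : ℝ) ≠ 0 := by linarith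
    have : (M * 4 - 1 : ℝ) ≠ 0 := by linarith
    have hid : (2 * M * (4 * M - 1) : ℝ) *
        (k / M + y / (2 * M) + z / (4 * M - 1) + w / (2 * M * (4 * M - 1) / (2 * M - 1)))
        = 2 * (4 * M - 1) * k + (4 * M - 1) * y + 2 * M * z + (2 * M - 1) * w := by
      field_simp
    rw [hwcoef] at h
    exact_mod_cast hid ▸ mul_le_of_le_one_right hD.le h
  have hint := mul_le_of_two_mul_sub_one_mul_le hM hk (by positivity : 0 ≤ 2 * y + z + w)
    (by nlinarith)
  have hid : (k : ℝ) / M + 2 * y / (4 * M + 1) + z / (4 * M + 1) + w / (4 * M + 1)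
      = ((4 * M + 1) * k + M * (2 * y + z + w)) / (M * (4 * M + 1)) := by
    field_simp
    ring
  rw [hid, div_le_one (by positivity)]
  exact_mod_cast (by linarith : (4 * M + 1) * k + M * (2 * y + z + w) ≤ M * (4 * M + 1))

lemma sum_coef_mul_eq (m : ℕ) (x : Fin (m + 3) → ℝ) : ∑ i, coef (m + 3) i * x i =
    ∑ i : Fin m, x i.castSucc.castSucc.castSucc / 2 ^ ((i : ℕ) + 1)
      + x (Fin.last m).castSucc.castSucc / (2 * 2 ^ m)
      + x (Fin.last (m + 1)).castSucc / (4 * 2 ^ m - 1)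
      + x (Fin.last (m + 2)) / (4 * 2 ^ m + 1 + 1 / (2 * 2 ^ m - 1)) := by
  simp only [Fin.sum_univ_castSucc, coef, alphaConst, Fin.val_castSucc, Fin.val_last, Fin.is_le',
    Nat.reduceSubDiff, Nat.add_one_sub_one, Order.lt_add_one_iff, Std.le_refl, add_le_iff_nonpos_right,
    nonpos_iff_eq_zero, one_ne_zero, Nat.add_left_cancel_iff, OfNat.ofNat_ne_zero, OfNat.ofNat_ne_one,
    ↓reduceIte, ite_mul, pow_succ, div_eq_inv_mul, mul_inv_rev, mul_one]
  ring

lemma sum_coef2_mul_eq (m : ℕ) (x : Fin (m + 3) → ℝ) : ∑ i, coef2 (m + 3) i * x i =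
    ∑ i : Fin m, x i.castSucc.castSucc.castSucc / 2 ^ ((i : ℕ) + 1)
      + 2 * x (Fin.last m).castSucc.castSucc / (4 * 2 ^ m + 1)
      + x (Fin.last (m + 1)).castSucc / (4 * 2 ^ m + 1)
      + x (Fin.last (m + 2)) / (4 * 2 ^ m + 1) := by
  simp only [Fin.sum_univ_castSucc, coef2, Fin.val_castSucc, Fin.val_last, Fin.is_lt,
    add_tsub_cancel_right, Nat.add_one_sub_one, lt_self_iff_false, add_lt_iff_neg_left, not_lt_zero,
    Nat.add_eq_left, one_ne_zero, OfNat.ofNat_ne_zero, ↓reduceIte, ite_mul, pow_succ, div_eq_inv_mul,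
    mul_inv_rev, mul_one]
  ring

lemma exists_int_sum_div_two_pow_eq (m : ℕ) (x : Fin m → ℤ) (hx : ∀ i, 0 ≤ x i) :
    ∃ k : ℤ, 0 ≤ k ∧ ∑ i, (x i : ℝ) / 2 ^ ((i : ℕ) + 1) = k / 2 ^ m := by
  refine ⟨∑ i : Fin m, 2 ^ (m - 1 - (i : ℕ)) * x i,
    Finset.sum_nonneg fun i _ => mul_nonneg (by positivity) (hx i), ?_⟩
  push_cast
  rw [Finset.sum_div]
  refine Finset.sum_congr rfl fun i _ => ?_
  have : (2 : ℝ) ^ m = 2 ^ (m - 1 - (i : ℕ)) * 2 ^ ((i : ℕ) + 1) := by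
    rw [← pow_add]
    congr 1
    omega
  rw [this, mul_div_mul_left _ _ (by positivity)]

/-- For `d ≥ 4`, every nonnegative integer point of `Δ(d)` satisfies the second
inequality `x_1/2 + ⋯ + x_{d-3}/2^{d-3} + (2x_{d-2} + x_{d-1} + x_d)/(2^{d-1}+1) ≤ 1`. -/
theorem integer_points_satisfy_second_inequality (d : ℕ) (hd : 4 ≤ d) (x : Fin d → ℤ)
    (hnn : ∀ i, 0 ≤ x i) (h1 : ∑ i, coef d i * (x i : ℝ) ≤ 1) :
    ∑ i, coef2 d i * (x i : ℝ) ≤ 1 := by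
  obtain ⟨m, rfl⟩ : ∃ m, d = m + 3 := ⟨d - 3, by omega⟩
  obtain ⟨k, hk, hhead⟩ :=
    exists_int_sum_div_two_pow_eq m (fun i => x i.castSucc.castSucc.castSucc) fun i => hnn _
  rw [sum_coef_mul_eq, hhead] at h1
  rw [sum_coef2_mul_eq, hhead]
  have hM : (2 : ℤ) ≤ 2 ^ m := le_self_pow₀ one_le_two (by omega)
  exact_mod_cast second_ineq_of_first hM hk (hnn _) (hnn _) (hnn _) (by exact_mod_cast h1)
end

section
/- Let d ≥ 4 and α := 1/(2^{d−2} − 1), and let Δ(d) := {x ∈ ℝ^d : x_i ≥ 0 for all i, and x_1/2 + x_2/4 + ⋯ + x_{d−2}/2^{d−2} + x_{d−1}/(2^{d−1} − 1) + x_d/(2^{d−1} + 1 + α) ≤ 1}. Then the integer hull Δ(d)_I := conv(Δ(d) ∩ ℤ^d) equals {x ∈ Δ(d) : x_1/2 + x_2/4 + ⋯ + x_{d−3}/2^{d−3} + (2x_{d−2} + x_{d−1} + x_d)/(2^{d−1} + 1) ≤ 1}, and it also equals the convex hull of the d+2 points {0, 2e_1, 4e_2, …, 2^{d−2}e_{d−2},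 (2^{d−1} − 1)e_{d−1}, (2^{d−1} + 1)e_d, e_{d−1} + 2^{d−1}e_d, e_{d−2} + (2^{d−1} − 1)e_d}. -/
open MeasureTheory
open scoped ENNReal

/-!
Write `d = m + 3`, `N = 2^(d-1)`, `a, b, c` for the last three coordinates of a point `x` and
`h = x₁/2 + ⋯ + x_{d-3}/2^{d-3}`. With `s = N h + 2a + b + c`, the inequality of `Δ(d)` scaled by
`N(N-1)` reads `(N-1) s + b - c ≤ N(N-1)`, and the extra inequality scaled by `N(N+1)` reads
`N s + N h ≤ N(N+1)`. At a lattice point `s` is an integer and `N h` a multiple of `4`, so the first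
forces either `s ≤ N` or `s = N + 1, h = 0`, and in both cases the second holds: the integer hull
lies in the smaller polytope. Conversely, each point of the smaller polytope is a subconvex
combination of the listed nonzero points (with weights `x_i/2^i` on the first `d-3` axes and one
of three explicit choices on the last three coordinates), and these points are lattice points
of `Δ(d)`.
-/

open Finset Matrix

theorem sum_smul_mem_convexHull_of_sum_le_one {E ι : Type*} [AddCommGroup E] [Module ℝ E]
    [Fintype ι] {s : Set E} (hs : (0 : E) ∈ s) {t : ι → ℝ} {v : ι → E} (ht : ∀ i, 0 ≤ t i)
    (ht1 : ∑ i, t i ≤ 1) (hv : ∀ i, v i ∈ s) : ∑ i, t i • v i ∈ convexHull ℝ s := by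
  have h := (convex_convexHull ℝ s).sum_mem (t := univ)
    (w := fun o : Option ι => o.elim (1 - ∑ i, t i) t) (z := fun o => o.elim 0 v) ?_ ?_ ?_
  · simpa [Fintype.sum_option] using h
  · rintro (_ | i) -
    · simpa using ht1
    · exact ht i
  · simp [Fintype.sum_option]
  · rintro (_ | i) -
    · exact subset_convexHull ℝ s hs
    · exact subset_convexHull ℝ s (hv i)

theorem convex_setOf_dotProduct_le {ι : Type*} [Fintype ι] (c : ι → ℝ) (r : ℝ) :
    Convex ℝ {x : ι → ℝ | c ⬝ᵥ x ≤ r} :=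
  convex_halfSpace_le ⟨dotProduct_add c, fun t x => dotProduct_smul t c x⟩ r

theorem single_mem_intPts_s18 {d : ℕ} (j : Fin d) (k : ℤ) : Pi.single j (k : ℝ) ∈ intPts d := by
  intro i
  rcases eq_or_ne i j with rfl | h
  · exact ⟨k, by simp⟩
  · exact ⟨0, by simp [h]⟩

theorem add_mem_intPts {d : ℕ} {x y : Fin d → ℝ} (hx : x ∈ intPts d) (hy : y ∈ intPts d) :
    x + y ∈ intPts d := by
  intro i
  obtain ⟨a, ha⟩ := hx i
  obtain ⟨b, hb⟩ := hy i
  exact ⟨a + b, by simp [ha, hb]⟩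

theorem int_cut {N L a b : ℤ} (c : ℤ) (hN : 4 < N) (hL : 0 ≤ L) (ha : 0 ≤ a) (hb : 0 ≤ b)
    (h : (N - 1) * (4 * L + 2 * a + b + c) + b - c ≤ N * (N - 1)) :
    N * (4 * L + 2 * a + b + c) + 4 * L ≤ N * (N + 1) := by
  set s := 4 * L + 2 * a + b + c
  rcases le_or_gt s N with hsN | hsN
  · nlinarith
  · have hexcess : (N - 2) * (s - N) ≤ N - 4 * L - 2 * a - 2 * b := by linarith
    have hs1 : s = N + 1 := by nlinarith
    have hL0 : L = 0 := by rw [hs1] at hexcess; omega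
    rw [hs1, hL0]
    linarith

namespace DeltaPoly

theorem mem_iff {d : ℕ} {x : Fin d → ℝ} : x ∈ DeltaPoly d ↔ 0 ≤ x ∧ coef d ⬝ᵥ x ≤ 1 := Iff.rfl

theorem convex (d : ℕ) : Convex ℝ (DeltaPoly d) :=
  (convex_Ici 0).inter (convex_setOf_dotProduct_le (coef d) 1)

variable (m : ℕ)

def ia : Fin (m + 3) := ⟨m, by omega⟩
def ib : Fin (m + 3) := ⟨m + 1, by omega⟩
def ic : Fin (m + 3) := ⟨m + 2, by omega⟩

theorem sum_univ_eq_head_add {M : Type*} [AddCommMonoid M] (f : Fin (m + 3) → M) :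
    ∑ i, f i = ∑ i : Fin m, f (Fin.castAdd 3 i) + f (ia m) + f (ib m) + f (ic m) := by
  rw [Fin.sum_univ_add, Fin.sum_univ_three, ← add_assoc, ← add_assoc]
  rfl

noncomputable def head (x : Fin (m + 3) → ℝ) : ℝ :=
  ∑ i : Fin m, x (Fin.castAdd 3 i) / 2 ^ ((i : ℕ) + 1)

theorem coef_of_lt {i : Fin (m + 3)} (hi : (i : ℕ) < m + 1) :
    coef (m + 3) i = 1 / 2 ^ ((i : ℕ) + 1) :=
  if_pos hi

theorem coef_ia : coef (m + 3) (ia m) = 1 / 2 ^ (m + 1) :=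
  coef_of_lt m (show m < m + 1 by omega)

theorem coef_ib : coef (m + 3) (ib m) = 1 / (2 ^ (m + 2) - 1) := by
  simp [coef, ib]

theorem coef_ic :
    coef (m + 3) (ic m) = (2 ^ (m + 2) - 2) / (2 ^ (m + 2) * (2 ^ (m + 2) - 1)) := by
  change ite _ _ (ite _ _ (1 / (2 ^ (m + 2) + 1 + 1 / (2 ^ (m + 1) - 1)))) = _
  rw [if_neg (by simp [ic]), if_neg (by simp [ic]), pow_succ' _ (m + 1)]
  have hP : (2 : ℝ) ≤ 2 ^ (m + 1) := le_self_pow₀ one_le_two (by omega)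
  generalize (2 : ℝ) ^ (m + 1) = P at hP ⊢
  have hP1 : P - 1 ≠ 0 := by linarith
  have hN1 : 2 * P - 1 ≠ 0 := by linarith
  have hN : 2 * P + 1 + 1 / (P - 1) ≠ 0 := by
    have : 0 < 1 / (P - 1) := one_div_pos.2 (by linarith)
    linarith
  rw [div_eq_div_iff hN (mul_ne_zero (by linarith) hN1)]
  field_simp
  ring

theorem sum_coef_mul (x : Fin (m + 3) → ℝ) :
    ∑ i, coef (m + 3) i * x i = head m x + x (ia m) / 2 ^ (m + 1) + x (ib m) / (2 ^ (m + 2) - 1)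
      + x (ic m) * ((2 ^ (m + 2) - 2) / (2 ^ (m + 2) * (2 ^ (m + 2) - 1))) := by
  have hhead : ∑ i : Fin m, coef (m + 3) (Fin.castAdd 3 i) * x (Fin.castAdd 3 i) = head m x :=
    sum_congr rfl fun i _ => by rw [coef_of_lt m (Nat.lt_succ_of_lt i.isLt), Fin.val_castAdd]; ring
  rw [sum_univ_eq_head_add, hhead, coef_ia, coef_ib, coef_ic]
  ring

theorem sum_coef2_mul (x : Fin (m + 3) → ℝ) :
    ∑ i, coef2 (m + 3) i * x i
      = head m x + (2 * x (ia m) + x (ib m) + x (ic m)) / (2 ^ (m + 2) + 1) := by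
  have hhead : ∑ i : Fin m, coef2 (m + 3) (Fin.castAdd 3 i) * x (Fin.castAdd 3 i) = head m x :=
    sum_congr rfl fun i _ => by simp [coef2, div_eq_inv_mul]
  rw [sum_univ_eq_head_add, hhead]
  simp [coef2, ia, ib, ic]
  ring

theorem sum_coef_le_one_iff (x : Fin (m + 3) → ℝ) :
    ∑ i, coef (m + 3) i * x i ≤ 1 ↔
      (2 ^ (m + 2) - 1) * (2 ^ (m + 2) * head m x + 2 * x (ia m) + x (ib m) + x (ic m))
        + x (ib m) - x (ic m) ≤ 2 ^ (m + 2) * (2 ^ (m + 2) - 1) := by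
  have hP : (2 : ℝ) ≤ 2 ^ (m + 1) := le_self_pow₀ one_le_two (by omega)
  rw [sum_coef_mul, pow_succ' _ (m + 1)]
  generalize (2 : ℝ) ^ (m + 1) = P at hP ⊢
  have hP0 : P ≠ 0 := by positivity
  have hN1 : 2 * P - 1 ≠ 0 := by linarith
  have hN : 0 < 2 * P * (2 * P - 1) := by nlinarith
  have key : 2 * P * (2 * P - 1) * (head m x + x (ia m) / P + x (ib m) / (2 * P - 1)
      + x (ic m) * ((2 * P - 2) / (2 * P * (2 * P - 1))))
      = (2 * P - 1) * (2 * P * head m x + 2 * x (ia m) + x (ib m) + x (ic m))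
        + x (ib m) - x (ic m) := by
    field_simp
    ring
  rw [← mul_le_mul_iff_of_pos_left hN, mul_one, key]

theorem sum_coef2_le_one_iff (x : Fin (m + 3) → ℝ) :
    ∑ i, coef2 (m + 3) i * x i ≤ 1 ↔
      2 ^ (m + 2) * (2 ^ (m + 2) * head m x + 2 * x (ia m) + x (ib m) + x (ic m))
        + 2 ^ (m + 2) * head m x ≤ 2 ^ (m + 2) * (2 ^ (m + 2) + 1) := by
  have hN : (0 : ℝ) < 2 ^ (m + 2) * (2 ^ (m + 2) + 1) := by positivity
  have key : 2 ^ (m + 2) * (2 ^ (m + 2) + 1)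
      * (head m x + (2 * x (ia m) + x (ib m) + x (ic m)) / (2 ^ (m + 2) + 1))
      = 2 ^ (m + 2) * (2 ^ (m + 2) * head m x + 2 * x (ia m) + x (ib m) + x (ic m))
        + 2 ^ (m + 2) * head m x := by
    field_simp
    ring
  rw [sum_coef2_mul, ← mul_le_mul_iff_of_pos_left hN, mul_one, key]

theorem sum_coef2_le_one_of_mem_intPts (hm : 1 ≤ m) {x : Fin (m + 3) → ℝ}
    (hx : x ∈ DeltaPoly (m + 3) ∩ intPts (m + 3)) : ∑ i, coef2 (m + 3) i * x i ≤ 1 := by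
  obtain ⟨⟨hx0, hΔ⟩, hxZ⟩ := hx
  choose n hn using hxZ
  obtain rfl : x = fun i => (n i : ℝ) := funext hn
  have hn0 : ∀ i, 0 ≤ n i := fun i => Int.cast_nonneg_iff.1 (hx0 i)
  set L : ℤ := ∑ i : Fin m, n (Fin.castAdd 3 i) * 2 ^ (m - 1 - (i : ℕ))
  have hL : 0 ≤ L := sum_nonneg fun i _ => mul_nonneg (hn0 _) (by positivity)
  have hhead : 2 ^ (m + 2) * head m (fun i => (n i : ℝ)) = 4 * L := by
    simp only [L, head, Int.cast_sum, Int.cast_mul, Int.cast_pow, Int.cast_ofNat, mul_sum]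
    refine sum_congr rfl fun i _ => ?_
    have hi : m + 2 = (m - 1 - (i : ℕ)) + 2 + ((i : ℕ) + 1) := by omega
    rw [hi, pow_add, pow_add]
    field_simp
    ring
  have hN : (4 : ℤ) < 2 ^ (m + 2) :=
    calc (4 : ℤ) < 2 ^ 3 := by norm_num
      _ ≤ 2 ^ (m + 2) := pow_le_pow_right₀ (by norm_num) (by omega)
  rw [sum_coef_le_one_iff, hhead] at hΔ
  rw [sum_coef2_le_one_iff, hhead]
  exact_mod_cast int_cut (n (ic m)) hN hL (hn0 _) (hn0 _) (by exact_mod_cast hΔ)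

noncomputable def vertices : Set (Fin (m + 3) → ℝ) :=
  {0}
    ∪ (Set.range fun i : {i : Fin (m + 3) // (i : ℕ) < m + 1} =>
        Pi.single i.1 ((2 : ℝ) ^ ((i.1 : ℕ) + 1)))
    ∪ {Pi.single (ib m) ((2 : ℝ) ^ (m + 2) - 1),
       Pi.single (ic m) ((2 : ℝ) ^ (m + 2) + 1),
       Pi.single (ib m) (1 : ℝ) + Pi.single (ic m) ((2 : ℝ) ^ (m + 2)),
       Pi.single (ia m) (1 : ℝ) + Pi.single (ic m) ((2 : ℝ) ^ (m + 2) - 1)}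

theorem vertices_subset : vertices m ⊆ DeltaPoly (m + 3) ∩ intPts (m + 3) := by
  rintro x ((rfl | ⟨⟨i, hi⟩, rfl⟩) | hx)
  · exact ⟨mem_iff.2 ⟨le_rfl, by simp⟩, fun i => ⟨0, by simp⟩⟩
  · refine ⟨mem_iff.2 ⟨Pi.single_nonneg.2 (by positivity), ?_⟩,
      by exact_mod_cast single_mem_intPts_s18 i (2 ^ ((i : ℕ) + 1))⟩
    rw [dotProduct_single, coef_of_lt m hi, one_div_mul_cancel (by positivity)]
  have hN : (4 : ℝ) ≤ 2 ^ (m + 2) := by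
    calc (4 : ℝ) = 2 ^ 2 := by norm_num
      _ ≤ 2 ^ (m + 2) := pow_le_pow_right₀ one_le_two (by omega)
  have hNZ : ∀ k : ℤ, Pi.single (ic m) ((2 : ℝ) ^ (m + 2) + k) ∈ intPts (m + 3) := fun k => by
    exact_mod_cast single_mem_intPts_s18 (ic m) (2 ^ (m + 2) + k)
  simp only [Set.mem_insert_iff, Set.mem_singleton_iff] at hx
  have hia : coef (m + 3) (ia m) = 2 / 2 ^ (m + 2) := by
    rw [coef_ia, pow_succ _ (m + 1)]; field_simp
  rcases hx with rfl | rfl | rfl | rfl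
  · refine ⟨mem_iff.2 ⟨Pi.single_nonneg.2 (by linarith), ?_⟩,
      by exact_mod_cast single_mem_intPts_s18 (ib m) (2 ^ (m + 2) - 1)⟩
    rw [dotProduct_single, coef_ib, one_div_mul_cancel (by linarith)]
  · refine ⟨mem_iff.2 ⟨Pi.single_nonneg.2 (by linarith), ?_⟩, by exact_mod_cast hNZ 1⟩
    rw [dotProduct_single, coef_ic, div_mul_eq_mul_div, div_le_one (by nlinarith)]
    nlinarith
  · refine ⟨mem_iff.2 ⟨add_nonneg (Pi.single_nonneg.2 zero_le_one)
      (Pi.single_nonneg.2 (by linarith)), ?_⟩,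
      add_mem_intPts (by exact_mod_cast single_mem_intPts_s18 (ib m) 1) (by exact_mod_cast hNZ 0)⟩
    rw [dotProduct_add, dotProduct_single, dotProduct_single, coef_ib, coef_ic]
    generalize (2 : ℝ) ^ (m + 2) = N at hN ⊢
    have : N - 1 ≠ 0 := by linarith
    have : N ≠ 0 := by linarith
    apply le_of_eq
    field_simp
    ring
  · refine ⟨mem_iff.2 ⟨add_nonneg (Pi.single_nonneg.2 zero_le_one)
      (Pi.single_nonneg.2 (by linarith)), ?_⟩,
      add_mem_intPts (by exact_mod_cast single_mem_intPts_s18 (ia m) 1) (by exact_mod_cast hNZ (-1))⟩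
    rw [dotProduct_add, dotProduct_single, dotProduct_single, hia, coef_ic]
    generalize (2 : ℝ) ^ (m + 2) = N at hN ⊢
    have : N - 1 ≠ 0 := by linarith
    have : N ≠ 0 := by linarith
    apply le_of_eq
    field_simp
    ring

theorem exists_tail_weights {P h a b c : ℝ} (hP : 2 ≤ P) (ha : 0 ≤ a) (hb : 0 ≤ b) (hc : 0 ≤ c)
    (hΔ : h + a / P + b / (2 * P - 1) + c * ((2 * P - 2) / (2 * P * (2 * P - 1))) ≤ 1)
    (hQ : h + (2 * a + b + c) / (2 * P + 1) ≤ 1) :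
    ∃ u₀ u₁ u₂ u₃ u₄ : ℝ, 0 ≤ u₀ ∧ 0 ≤ u₁ ∧ 0 ≤ u₂ ∧ 0 ≤ u₃ ∧ 0 ≤ u₄ ∧
      h + (u₀ + u₁ + u₂ + u₃ + u₄) ≤ 1 ∧ a = u₀ * P + u₄ ∧ b = u₁ * (2 * P - 1) + u₃ ∧
      c = u₂ * (2 * P + 1) + u₃ * (2 * P) + u₄ * (2 * P - 1) := by
  have hP0 : 0 < P := by linarith
  have hN1 : 0 < 2 * P - 1 := by linarith
  have := hP0.ne'
  have := hN1.ne'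
  rcases le_or_gt c (2 * P * b) with hcb | hcb
  · have hw : (b - c / (2 * P)) / (2 * P - 1) + c / (2 * P)
        = b / (2 * P - 1) + c * ((2 * P - 2) / (2 * P * (2 * P - 1))) := by
      field_simp; ring
    exact ⟨a / P, (b - c / (2 * P)) / (2 * P - 1), 0, c / (2 * P), 0, by positivity,
      div_nonneg (by rw [sub_nonneg, div_le_iff₀ (by positivity)]; linarith) hN1.le, le_rfl,
      by positivity, le_rfl, by linarith, by field_simp; ring, by field_simp; ring,
      by field_simp; ring⟩
  rcases le_or_gt c (2 * P * b + (2 * P - 1) * a) with hcab | hcab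
  · have hw : (a - (c - 2 * P * b) / (2 * P - 1)) / P + b + (c - 2 * P * b) / (2 * P - 1)
        = a / P + b / (2 * P - 1) + c * ((2 * P - 2) / (2 * P * (2 * P - 1))) := by
      field_simp; ring
    exact ⟨(a - (c - 2 * P * b) / (2 * P - 1)) / P, 0, 0, b, (c - 2 * P * b) / (2 * P - 1),
      div_nonneg (by rw [sub_nonneg, div_le_iff₀ hN1]; linarith) hP0.le, le_rfl, le_rfl, hb,
      div_nonneg (by linarith) hN1.le, by linarith, by field_simp; ring, by ring,
      by field_simp; ring⟩
  · have hw : (c - 2 * P * b - (2 * P - 1) * a) / (2 * P + 1) + b + a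
        = (2 * a + b + c) / (2 * P + 1) := by
      field_simp; ring
    exact ⟨0, 0, (c - 2 * P * b - (2 * P - 1) * a) / (2 * P + 1), b, a, le_rfl, le_rfl,
      div_nonneg (by linarith) (by linarith), hb, ha, by linarith, by ring, by ring,
      by field_simp; ring⟩

theorem mem_convexHull_vertices {x : Fin (m + 3) → ℝ} (hx : 0 ≤ x) {u₀ u₁ u₂ u₃ u₄ : ℝ}
    (h₀ : 0 ≤ u₀) (h₁ : 0 ≤ u₁) (h₂ : 0 ≤ u₂) (h₃ : 0 ≤ u₃) (h₄ : 0 ≤ u₄)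
    (hsum : head m x + (u₀ + u₁ + u₂ + u₃ + u₄) ≤ 1)
    (ha : x (ia m) = u₀ * 2 ^ (m + 1) + u₄)
    (hb : x (ib m) = u₁ * (2 * 2 ^ (m + 1) - 1) + u₃)
    (hc : x (ic m) = u₂ * (2 * 2 ^ (m + 1) + 1) + u₃ * (2 * 2 ^ (m + 1))
      + u₄ * (2 * 2 ^ (m + 1) - 1)) :
    x ∈ convexHull ℝ (vertices m) := by
  let t : Fin m ⊕ Fin 5 → ℝ :=
    Sum.elim (fun i => x (Fin.castAdd 3 i) / 2 ^ ((i : ℕ) + 1)) ![u₀, u₁, u₂, u₃, u₄]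
  let v : Fin m ⊕ Fin 5 → Fin (m + 3) → ℝ :=
    Sum.elim (fun i => Pi.single (Fin.castAdd 3 i) (2 ^ ((i : ℕ) + 1)))
      ![Pi.single (ia m) (2 ^ (m + 1)), Pi.single (ib m) (2 ^ (m + 2) - 1),
        Pi.single (ic m) (2 ^ (m + 2) + 1), Pi.single (ib m) 1 + Pi.single (ic m) (2 ^ (m + 2)),
        Pi.single (ia m) 1 + Pi.single (ic m) (2 ^ (m + 2) - 1)]
  have hxv : x = ∑ k, t k • v k := by
    have e : ∀ (j : Fin (m + 3)) (r : ℝ), Pi.single j r = r • (Pi.single j 1 : Fin (m + 3) → ℝ) :=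
      fun j r => by rw [← Pi.single_smul', smul_eq_mul, mul_one]
    have hhead : ∀ i : Fin m,
        t (.inl i) • v (.inl i) = Pi.single (Fin.castAdd 3 i) (x (Fin.castAdd 3 i)) := fun i => by
      simp only [t, v, Sum.elim_inl]
      rw [← Pi.single_smul', smul_eq_mul, div_mul_cancel₀ _ (by positivity)]
    conv_lhs => rw [← univ_sum_single x, sum_univ_eq_head_add]
    rw [Fintype.sum_sum_type, Fin.sum_univ_five, sum_congr rfl fun i _ => hhead i]
    simp only [t, v, Sum.elim_inr, Matrix.cons_val]
    rw [e (ia m), e (ib m), e (ic m), e (ia m) (2 ^ (m + 1)), e (ib m) (2 ^ (m + 2) - 1),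
      e (ic m) (2 ^ (m + 2) + 1), e (ic m) (2 ^ (m + 2)), e (ic m) (2 ^ (m + 2) - 1)]
    linear_combination (norm := module) ha • (Pi.single (ia m) 1 : Fin (m + 3) → ℝ)
      + hb • (Pi.single (ib m) 1 : Fin (m + 3) → ℝ) + hc • (Pi.single (ic m) 1 : Fin (m + 3) → ℝ)
  rw [hxv]
  refine sum_smul_mem_convexHull_of_sum_le_one (s := vertices m) (Or.inl (Or.inl rfl)) ?_ ?_ ?_
  · rintro (i | k)
    · exact div_nonneg (hx _) (by positivity)
    · fin_cases k <;> assumption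
  · simpa [t, Fintype.sum_sum_type, Fin.sum_univ_five, head] using hsum
  · rintro (i | k)
    · exact Or.inl (Or.inr ⟨⟨Fin.castAdd 3 i, Nat.lt_succ_of_lt i.isLt⟩, rfl⟩)
    · fin_cases k
      · exact Or.inl (Or.inr ⟨⟨ia m, by simp [ia]⟩, rfl⟩)
      all_goals simp [v, vertices]

theorem subset_convexHull_vertices :
    {x ∈ DeltaPoly (m + 3) | ∑ i, coef2 (m + 3) i * x i ≤ 1} ⊆ convexHull ℝ (vertices m) := by
  rintro x ⟨⟨hx, hΔ⟩, hQ⟩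
  rw [sum_coef_mul, pow_succ' _ (m + 1)] at hΔ
  rw [sum_coef2_mul, pow_succ' _ (m + 1)] at hQ
  obtain ⟨u₀, u₁, u₂, u₃, u₄, h₀, h₁, h₂, h₃, h₄, hsum, ha, hb, hc⟩ :=
    exists_tail_weights (le_self_pow₀ one_le_two (by omega)) (hx _) (hx _) (hx _) hΔ hQ
  exact mem_convexHull_vertices m hx h₀ h₁ h₂ h₃ h₄ hsum ha hb hc

end DeltaPoly

/-- For `d ≥ 4`, the integer hull of `Δ(d)` equals the subset of `Δ(d)` cut out by
the second inequality, and equals the convex hull of the `d+2` listed lattice points. -/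
theorem integer_hull_DeltaPoly (d : ℕ) (hd : 4 ≤ d) :
    convexHull ℝ (DeltaPoly d ∩ intPts d)
      = {x ∈ DeltaPoly d | ∑ i, coef2 d i * x i ≤ 1} ∧
    convexHull ℝ (DeltaPoly d ∩ intPts d)
      = convexHull ℝ
          ({0}
            ∪ (Set.range fun i : {i : Fin d // (i : ℕ) < d - 2} =>
                Pi.single i.1 ((2 : ℝ) ^ ((i.1 : ℕ) + 1)))
            ∪ {Pi.single (⟨d - 2, by omega⟩ : Fin d) ((2 : ℝ) ^ (d - 1) - 1),
               Pi.single (⟨d - 1, by omega⟩ : Fin d) ((2 : ℝ) ^ (d - 1) + 1),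
               Pi.single (⟨d - 2, by omega⟩ : Fin d) (1 : ℝ)
                 + Pi.single (⟨d - 1, by omega⟩ : Fin d) ((2 : ℝ) ^ (d - 1)),
               Pi.single (⟨d - 3, by omega⟩ : Fin d) (1 : ℝ)
                 + Pi.single (⟨d - 1, by omega⟩ : Fin d) ((2 : ℝ) ^ (d - 1) - 1)}) := by
  obtain ⟨m, rfl⟩ : ∃ m, d = m + 3 := ⟨d - 3, by omega⟩
  have hull_subset : convexHull ℝ (DeltaPoly (m + 3) ∩ intPts (m + 3))
      ⊆ {x ∈ DeltaPoly (m + 3) | ∑ i, coef2 (m + 3) i * x i ≤ 1} :=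
    convexHull_min (fun x hx => ⟨hx.1, DeltaPoly.sum_coef2_le_one_of_mem_intPts m (by omega) hx⟩)
      ((DeltaPoly.convex _).inter (convex_setOf_dotProduct_le (coef2 (m + 3)) 1))
  have subset_hull := DeltaPoly.subset_convexHull_vertices m
  have vertices_hull_subset := convexHull_mono (𝕜 := ℝ) (DeltaPoly.vertices_subset m)
  exact ⟨hull_subset.antisymm (subset_hull.trans vertices_hull_subset),
    (hull_subset.trans subset_hull).antisymm vertices_hull_subset⟩
end
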